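/- arXiv:1806.07015 — 8 statements merged into one kernel-verified Lean document; each statement's English description precedes it below -/
import Mathlib

section
/- Let f : ℝ^d → ℂ be a bounded continuous function and let α ∈ ℝ^d. Let M_f denote the multiplication operator (M_f ξ)(t) = f(t)ξ(t) and T_α the translation operator (T_α ξ)(t) = ξ(t+α), both bounded operators on L²(ℝ^d). Then the commutator [M_f, T_α] = M_f T_α − T_α M_f is a compact operator if and only if f(t) = f(t+α) for every t ∈ ℝ^d (i.e. f is α-periodic). -/
/-!
The commutator acts by `ξ ↦ (f - f(· + α)) · ξ(· + α)`, so composed with translation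
by `-α` it becomes multiplication by the continuous function `g = f - f(· + α)`.
If `g(t₀) ≠ 0`, then `‖g‖ ≥ ε` on a ball around `t₀`; normalized indicators of
infinitely many disjoint open subsets of that ball form a bounded sequence whose
images under multiplication by `g` stay `ε` apart, which is impossible for a
compact operator.
-/

open MeasureTheory Metric Set Function
open scoped ENNReal

lemma IsCompact.exists_ne_dist_lt {X : Type*} [PseudoMetricSpace X] {K : Set X}
    (hK : IsCompact K) {u : ℕ → X} (hu : ∀ n, u n ∈ K) {ε : ℝ} (hε : 0 < ε) :
    ∃ m n, m ≠ n ∧ dist (u m) (u n) < ε := by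
  obtain ⟨_, -, φ, hφ, hlim⟩ := hK.tendsto_subseq hu
  obtain ⟨N, hN⟩ := cauchySeq_iff'.mp hlim.cauchySeq ε hε
  exact ⟨φ (N + 1), φ N, hφ.injective.ne N.succ_ne_self, hN (N + 1) N.le_succ⟩

lemma IsCompactOperator.exists_ne_norm_sub_lt {𝕜 E F : Type*} [NontriviallyNormedField 𝕜]
    [SeminormedAddCommGroup E] [NormedSpace 𝕜 E] [NormedAddCommGroup F] [NormedSpace 𝕜 F]
    {T : E →L[𝕜] F} (hT : IsCompactOperator T) {u : ℕ → E} (hu : ∀ n, ‖u n‖ ≤ 1)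
    {ε : ℝ} (hε : 0 < ε) : ∃ m n, m ≠ n ∧ ‖T (u m) - T (u n)‖ < ε := by
  simpa only [dist_eq_norm] using
    (hT.isCompact_closure_image_closedBall (f := (T : E →ₗ[𝕜] F)) 1).exists_ne_dist_lt
      (fun n => subset_closure (mem_image_of_mem T (mem_closedBall_zero_iff.mpr (hu n)))) hε

lemma exists_pairwise_disjoint_open_nonempty_subset_ball {E : Type*} [NormedAddCommGroup E]
    [NormedSpace ℝ E] [Nontrivial E] (x : E) {δ : ℝ} (hδ : 0 < δ) :
    ∃ A : ℕ → Set E, (∀ n, IsOpen (A n)) ∧ (∀ n, (A n).Nonempty) ∧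
      Pairwise (Disjoint on A) ∧ ∀ n, A n ⊆ ball x δ := by
  set r : ℕ → ℝ := fun n => δ / (n + 1)
  have hr : StrictAnti r := fun m n h =>
    div_lt_div_of_pos_left hδ (by positivity) (by exact_mod_cast Nat.succ_lt_succ h)
  refine ⟨fun n => (dist · x) ⁻¹' Ioo (r (n + 1)) (r n),
    fun n => isOpen_Ioo.preimage (continuous_id.dist continuous_const), fun n => ?_, ?_,
    fun n y hy => mem_ball.mpr (hy.2.trans_le ?_)⟩
  · have hrn := hr n.lt_succ_self
    obtain ⟨y, hy⟩ := NormedSpace.sphere_nonempty (x := x).mpr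
      (by positivity : 0 ≤ (r (n + 1) + r n) / 2)
    exact ⟨y, by rw [mem_preimage, mem_sphere.mp hy]; constructor <;> linarith⟩
  · simpa only [Order.succ_eq_add_one] using
      hr.antitone.pairwise_disjoint_on_Ioo_succ.mono fun m n h => h.preimage (dist · x)
  · simpa [r] using hr.antitone (Nat.zero_le n)

section Lp

variable {X 𝕜 : Type*} [MeasurableSpace X] {μ : Measure X} {p : ℝ≥0∞}

lemma norm_indicatorConstLp_le_norm_sub_of_disjoint {E : Type*} [NormedAddCommGroup E]
    {s t : Set X} (hst : Disjoint s t) (hs : MeasurableSet s) (hμs : μ s ≠ ∞)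
    (ht : MeasurableSet t) (hμt : μ t ≠ ∞) (c c' : E) :
    ‖indicatorConstLp p hs hμs c‖ ≤
      ‖indicatorConstLp p hs hμs c - indicatorConstLp p ht hμt c'‖ := by
  refine Lp.norm_le_norm_of_ae_le ?_
  filter_upwards [indicatorConstLp_coeFn (p := p) (hs := hs) (hμs := hμs) (c := c),
    indicatorConstLp_coeFn (p := p) (hs := ht) (hμs := hμt) (c := c'),
    Lp.coeFn_sub (indicatorConstLp p hs hμs c) (indicatorConstLp p ht hμt c')]
    with x hcx hc'x hsub
  rw [hsub, Pi.sub_apply, hcx, hc'x]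
  by_cases hx : x ∈ s
  · simp [indicator_of_mem hx, indicator_of_notMem (hst.notMem_of_mem_left hx)]
  · simp [indicator_of_notMem hx]

variable [RCLike 𝕜]

lemma exists_norm_indicatorConstLp_eq_one (hp₀ : p ≠ 0) (hp : p ≠ ∞) {s : Set X}
    (hs : MeasurableSet s) (hμs : μ s ≠ ∞) (hμs₀ : μ s ≠ 0) :
    ∃ c : 𝕜, ‖indicatorConstLp p hs hμs c‖ = 1 := by
  have hpos : 0 < μ.real s ^ (1 / p.toReal) :=
    Real.rpow_pos_of_pos (ENNReal.toReal_pos hμs₀ hμs) _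
  refine ⟨((μ.real s ^ (1 / p.toReal))⁻¹ : ℝ), ?_⟩
  rw [norm_indicatorConstLp hp₀ hp, RCLike.norm_ofReal, abs_of_pos (inv_pos.mpr hpos),
    inv_mul_cancel₀ hpos.ne']

lemma Lp.mul_norm_le_norm_of_ae_eq_mul {g : X → 𝕜} {v w : Lp 𝕜 p μ} {U : Set X} {ε : ℝ}
    (hε : 0 < ε) (hgU : ∀ x ∈ U, ε ≤ ‖g x‖) (hwU : ∀ᵐ x ∂μ, x ∉ U → w x = 0)
    (hv : v =ᵐ[μ] fun x => g x * w x) : ε * ‖w‖ ≤ ‖v‖ := by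
  rw [← le_inv_mul_iff₀ hε]
  refine Lp.norm_le_mul_norm_of_ae_le_mul ?_
  filter_upwards [hwU, hv] with x hwx hvx
  by_cases hx : x ∈ U
  · rw [hvx, norm_mul, le_inv_mul_iff₀ hε]
    exact mul_le_mul_of_nonneg_right (hgU x hx) (norm_nonneg _)
  · rw [hwx hx, norm_zero]
    positivity

end Lp

section Multiplication

variable {E 𝕜 : Type*} [NormedAddCommGroup E] [NormedSpace ℝ E] [Nontrivial E]
  [ProperSpace E] [MeasurableSpace E] [BorelSpace E] {μ : Measure E} [μ.IsOpenPosMeasure]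
  [IsFiniteMeasureOnCompacts μ] [RCLike 𝕜] {p : ℝ≥0∞} [Fact (1 ≤ p)]

theorem Continuous.eq_zero_of_isCompactOperator_mul (hp : p ≠ ∞) {g : E → 𝕜}
    (hg : Continuous g) {N : Lp 𝕜 p μ →L[𝕜] Lp 𝕜 p μ}
    (hN : ∀ ξ : Lp 𝕜 p μ, N ξ =ᵐ[μ] fun x => g x * ξ x) (hNc : IsCompactOperator N) :
    g = 0 := by
  funext x₀
  by_contra hx₀
  set ε := ‖g x₀‖ / 2
  have hε : 0 < ε := half_pos (norm_pos_iff.mpr hx₀)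
  obtain ⟨δ, hδ, hgδ⟩ : ∃ δ > 0, ∀ x ∈ ball x₀ δ, ε < ‖g x‖ :=
    eventually_nhds_iff_ball.mp
      ((hg.norm.tendsto x₀).eventually (lt_mem_nhds (half_lt_self (norm_pos_iff.mpr hx₀))))
  obtain ⟨A, hAo, hAne, hAdisj, hAsub⟩ :=
    exists_pairwise_disjoint_open_nonempty_subset_ball x₀ hδ
  have hAfin (n : ℕ) : μ (A n) ≠ ∞ :=
    ((measure_mono (hAsub n)).trans_lt measure_ball_lt_top).ne
  choose c hc using fun n => exists_norm_indicatorConstLp_eq_one (𝕜 := 𝕜)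
    (zero_lt_one.trans_le Fact.out).ne' hp (hAo n).measurableSet (hAfin n)
    ((hAo n).measure_ne_zero μ (hAne n))
  set u : ℕ → Lp 𝕜 p μ := fun n => indicatorConstLp p (hAo n).measurableSet (hAfin n) (c n)
  obtain ⟨m, n, hmn, hlt⟩ := hNc.exists_ne_norm_sub_lt (u := u) (fun n => (hc n).le) hε
  have hu_supp (k : ℕ) : ∀ᵐ x ∂μ, x ∉ A k → u k x = 0 := indicatorConstLp_coeFn_notMem
  have hsupp : ∀ᵐ x ∂μ, x ∉ ball x₀ δ → (u m - u n) x = 0 := by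
    filter_upwards [Lp.coeFn_sub (u m) (u n), hu_supp m, hu_supp n] with x hsub hm hn hx
    rw [hsub, Pi.sub_apply, hm (fun h => hx (hAsub m h)), hn (fun h => hx (hAsub n h)),
      sub_zero]
  have hsep : ε ≤ ‖N (u m) - N (u n)‖ := calc
    ε = ε * ‖u m‖ := by rw [hc m, mul_one]
    _ ≤ ε * ‖u m - u n‖ := by
      gcongr
      exact norm_indicatorConstLp_le_norm_sub_of_disjoint (hAdisj hmn) _ _ _ _ _ _
    _ ≤ ‖N (u m - u n)‖ :=
      Lp.mul_norm_le_norm_of_ae_eq_mul hε (fun x hx => (hgδ x hx).le) hsupp (hN _)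
    _ = ‖N (u m) - N (u n)‖ := by rw [map_sub]
  exact hlt.not_ge hsep

end Multiplication

section Translation

variable {G 𝕜 : Type*} [AddGroup G] [MeasurableSpace G] [MeasurableAdd G] {μ : Measure G}
  [μ.IsAddRightInvariant] [NormedField 𝕜] {p : ℝ≥0∞} [Fact (1 ≤ p)]
  {f : G → 𝕜} {α : G} {M T : Lp 𝕜 p μ →L[𝕜] Lp 𝕜 p μ}

lemma commutator_mul_translate_ae_eq
    (hM : ∀ ξ : Lp 𝕜 p μ, M ξ =ᵐ[μ] fun t => f t * ξ t)
    (hT : ∀ ξ : Lp 𝕜 p μ, T ξ =ᵐ[μ] fun t => ξ (t + α)) (ξ : Lp 𝕜 p μ) :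
    (M ∘L T - T ∘L M) ξ =ᵐ[μ] fun t => (f t - f (t + α)) * ξ (t + α) := by
  filter_upwards [Lp.coeFn_sub (M (T ξ)) (T (M ξ)), hM (T ξ), hT ξ, hT (M ξ),
    (measurePreserving_add_right μ α).quasiMeasurePreserving.ae_eq_comp (hM ξ)]
    with t hsub hMT hTξ hTM hMα
  simp only [comp_apply] at hMα
  rw [sub_apply, ContinuousLinearMap.comp_apply, ContinuousLinearMap.comp_apply, hsub,
    Pi.sub_apply, hMT, hTξ, hTM, hMα]
  ring

variable (𝕜 μ p) in
noncomputable def translateLp (α : G) : Lp 𝕜 p μ →L[𝕜] Lp 𝕜 p μ :=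
  (Lp.compMeasurePreservingₗᵢ 𝕜 (· - α)
    (measurePreserving_sub_right μ α)).toContinuousLinearMap

lemma commutator_comp_translateLp_ae_eq
    (hM : ∀ ξ : Lp 𝕜 p μ, M ξ =ᵐ[μ] fun t => f t * ξ t)
    (hT : ∀ ξ : Lp 𝕜 p μ, T ξ =ᵐ[μ] fun t => ξ (t + α)) (ξ : Lp 𝕜 p μ) :
    ((M ∘L T - T ∘L M) ∘L translateLp 𝕜 μ p α) ξ =ᵐ[μ]
      fun t => (f t - f (t + α)) * ξ t := by
  filter_upwards [commutator_mul_translate_ae_eq hM hT (translateLp 𝕜 μ p α ξ),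
    (measurePreserving_add_right μ α).quasiMeasurePreserving.ae_eq_comp
      (Lp.coeFn_compMeasurePreserving ξ (measurePreserving_sub_right μ α))] with t hD hξ
  rw [ContinuousLinearMap.comp_apply, hD]
  simp only [comp_apply, add_sub_cancel_right] at hξ
  rw [← hξ]
  rfl

end Translation

theorem stmt1_general {d : ℕ} (f : EuclideanSpace ℝ (Fin d) → ℂ)
    (hf_cont : Continuous f)
    (α : EuclideanSpace ℝ (Fin d))
    (M T : Lp ℂ 2 (volume : Measure (EuclideanSpace ℝ (Fin d))) →L[ℂ]
      Lp ℂ 2 (volume : Measure (EuclideanSpace ℝ (Fin d))))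
    (hM : ∀ ξ : Lp ℂ 2 (volume : Measure (EuclideanSpace ℝ (Fin d))),
      (M ξ : EuclideanSpace ℝ (Fin d) → ℂ) =ᵐ[volume] fun t => f t * ξ t)
    (hT : ∀ ξ : Lp ℂ 2 (volume : Measure (EuclideanSpace ℝ (Fin d))),
      (T ξ : EuclideanSpace ℝ (Fin d) → ℂ) =ᵐ[volume] fun t => ξ (t + α)) :
    IsCompactOperator (⇑(M ∘L T - T ∘L M)) ↔ ∀ t, f t = f (t + α) := by
  constructor
  · intro hc t
    rcases subsingleton_or_nontrivial (EuclideanSpace ℝ (Fin d)) with hE | hE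
    · rw [Subsingleton.elim (t + α) t]
    · have hg : (fun t => f t - f (t + α)) = 0 :=
        (hf_cont.sub (hf_cont.comp (continuous_add_const α))).eq_zero_of_isCompactOperator_mul
          ENNReal.ofNat_ne_top (commutator_comp_translateLp_ae_eq hM hT) (hc.comp_clm _)
      exact sub_eq_zero.mp (congr_fun hg t)
  · intro hper
    have hD : M ∘L T - T ∘L M = 0 := by
      ext ξ : 1
      refine Lp.ext ((commutator_mul_translate_ae_eq hM hT ξ).trans ?_)
      filter_upwards [Lp.coeFn_zero ℂ 2 volume] with t ht
      rw [zero_apply, ht, ← hper t, sub_self, zero_mul, Pi.zero_apply]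
    rw [hD]
    exact isCompactOperator_zero

/-- Let `f : ℝ^d → ℂ` be a bounded continuous function and `α ∈ ℝ^d`.
If `M` is the operator of multiplication by `f` on `L²(ℝ^d)` and `T` is the translation
operator `(Tξ)(t) = ξ(t+α)`, then the commutator `[M, T] = M∘T - T∘M` is compact if and
only if `f(t) = f(t+α)` for every `t`. -/
theorem stmt1 {d : ℕ} (f : EuclideanSpace ℝ (Fin d) → ℂ)
    (hf_cont : Continuous f) (hf_bdd : ∃ C, ∀ t, ‖f t‖ ≤ C)
    (α : EuclideanSpace ℝ (Fin d))
    (M T : Lp ℂ 2 (volume : Measure (EuclideanSpace ℝ (Fin d))) →L[ℂ]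
      Lp ℂ 2 (volume : Measure (EuclideanSpace ℝ (Fin d))))
    (hM : ∀ ξ : Lp ℂ 2 (volume : Measure (EuclideanSpace ℝ (Fin d))),
      (M ξ : EuclideanSpace ℝ (Fin d) → ℂ) =ᵐ[volume] fun t => f t * ξ t)
    (hT : ∀ ξ : Lp ℂ 2 (volume : Measure (EuclideanSpace ℝ (Fin d))),
      (T ξ : EuclideanSpace ℝ (Fin d) → ℂ) =ᵐ[volume] fun t => ξ (t + α)) :
    IsCompactOperator (⇑(M ∘L T - T ∘L M)) ↔ ∀ t, f t = f (t + α) :=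
  stmt1_general f hf_cont α M T hM hT
end

section
/- Let d ≥ 2 and let y : S^{d−1} → ℂ be a Lipschitz function. Then there exists a constant C such that for every nonzero n ∈ ℤ^d, | y(n/|n|) (1+|n|²)^{−d/2} − ∫_{n+[0,1]^d} y(t/|t|) (1+|t|²)^{−d/2} dt | ≤ C (1+|n|²)^{−(d+1)/2}. -/
/-! Write `F t = y (t / ‖t‖) * (1 + ‖t‖²) ^ (-d / 2)`. The cube `n + [0,1]^d` has volume one, so
the difference to estimate is the average of `F n - F t` over the cube, where `‖t - n‖ ≤ √d`.
For `‖n‖` large, the direction `t / ‖t‖` moves by `O(1 / ‖n‖)`, which `y` turns into an error of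
the same order since it is Lipschitz, and the weight varies by `O((1 + ‖n‖²) ^ (-(d + 1) / 2))`
by the mean value theorem; for `‖n‖` bounded it suffices that `F` is bounded. -/

open MeasureTheory

attribute [local instance] Classical.propDecidable

/-- The homogeneous (degree-zero) extension to `ℝ^d` of a function `y` on the unit sphere:
`homogF y t = y (t / ‖t‖)` for `t ≠ 0`, and `0` at `t = 0`. -/
noncomputable def homogF {d : ℕ}
    (y : Metric.sphere (0 : EuclideanSpace ℝ (Fin d)) 1 → ℂ)
    (t : EuclideanSpace ℝ (Fin d)) : ℂ :=
  if h : ‖t‖⁻¹ • t ∈ Metric.sphere (0 : EuclideanSpace ℝ (Fin d)) 1 then y ⟨_, h⟩ else 0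

def latticeVec {d : ℕ} (n : Fin d → ℤ) : EuclideanSpace ℝ (Fin d) :=
  WithLp.toLp 2 (fun i => (n i : ℝ))

open NormedSpace (norm_smul_normalize norm_normalize)

section Normalize

variable {E : Type*} [NormedAddCommGroup E] [NormedSpace ℝ E]

lemma norm_normalize_le (b : E) : ‖NormedSpace.normalize b‖ ≤ 1 := by
  rcases eq_or_ne b 0 with rfl | hb
  · simp
  · exact (norm_normalize hb).le

lemma norm_mul_norm_normalize_sub_normalize_le (a b : E) :
    ‖a‖ * ‖NormedSpace.normalize a - NormedSpace.normalize b‖ ≤ 2 * ‖a - b‖ := by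
  have key : ‖a‖ • (NormedSpace.normalize a - NormedSpace.normalize b) =
      (a - b) + (‖b‖ - ‖a‖) • NormedSpace.normalize b := by
    rw [smul_sub, norm_smul_normalize, sub_smul, norm_smul_normalize]
    abel
  have hba : |‖b‖ - ‖a‖| ≤ ‖a - b‖ := by
    rw [abs_sub_comm]; exact abs_norm_sub_norm_le a b
  calc ‖a‖ * ‖NormedSpace.normalize a - NormedSpace.normalize b‖
        = ‖(a - b) + (‖b‖ - ‖a‖) • NormedSpace.normalize b‖ := by
        rw [← key, norm_smul, Real.norm_of_nonneg (norm_nonneg a)]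
    _ ≤ ‖a - b‖ + |‖b‖ - ‖a‖| * 1 := by
        grw [norm_add_le, norm_smul, Real.norm_eq_abs, norm_normalize_le]
    _ ≤ 2 * ‖a - b‖ := by linarith

end Normalize

lemma abs_one_add_sq_rpow_sub_le {p m r s : ℝ} (hp : 0 ≤ p) (hm : 0 ≤ m) (hr : m ≤ r)
    (hs : m ≤ s) :
    |(1 + r ^ 2) ^ (-p / 2) - (1 + s ^ 2) ^ (-p / 2)| ≤
      p * (1 + m ^ 2) ^ (-(p + 1) / 2) * |r - s| := by
  have hderiv : ∀ x ∈ Set.Ici m, HasDerivWithinAt (fun s : ℝ => (1 + s ^ 2) ^ (-p / 2))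
      (2 * x * (-p / 2) * (1 + x ^ 2) ^ (-p / 2 - 1)) (Set.Ici m) x := by
    intro x _
    have h := ((hasDerivAt_pow 2 x).const_add 1).rpow_const (p := -p / 2)
      (Or.inl (by positivity))
    exact (h.congr_deriv (by norm_num)).hasDerivWithinAt
  have hbound : ∀ x ∈ Set.Ici m,
      ‖2 * x * (-p / 2) * (1 + x ^ 2) ^ (-p / 2 - 1)‖ ≤ p * (1 + m ^ 2) ^ (-(p + 1) / 2) := by
    intro x (hx : m ≤ x)
    have hx0 : 0 ≤ x := hm.trans hx
    have hpos : 0 < 1 + x ^ 2 := by positivity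
    have hsqrt : x ≤ (1 + x ^ 2) ^ (1 / 2 : ℝ) := by
      rw [← Real.sqrt_eq_rpow]
      exact Real.le_sqrt_of_sq_le (by linarith)
    calc ‖2 * x * (-p / 2) * (1 + x ^ 2) ^ (-p / 2 - 1)‖
        = p * (x * (1 + x ^ 2) ^ (-p / 2 - 1)) := by
          rw [Real.norm_eq_abs, abs_of_nonpos]
          · ring
          · have := Real.rpow_nonneg hpos.le (-p / 2 - 1)
            have : 0 ≤ x * p := mul_nonneg hx0 hp
            nlinarith
      _ ≤ p * ((1 + x ^ 2) ^ (1 / 2 : ℝ) * (1 + x ^ 2) ^ (-p / 2 - 1)) := by gcongr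
      _ = p * (1 + x ^ 2) ^ (-(p + 1) / 2) := by
          rw [← Real.rpow_add hpos]; congr 2; ring
      _ ≤ p * (1 + m ^ 2) ^ (-(p + 1) / 2) := by
          gcongr p * ?_
          exact Real.rpow_le_rpow_of_nonpos (by positivity) (by gcongr) (by linarith)
  simpa [Real.norm_eq_abs] using
    Convex.norm_image_sub_le_of_norm_hasDerivWithin_le hderiv hbound (convex_Ici m) hs hr

lemma one_add_half_sq_rpow_le {z : ℝ} (hz : z ≤ 0) (r : ℝ) :
    (1 + (r / 2) ^ 2) ^ z ≤ 4 ^ (-z) * (1 + r ^ 2) ^ z := by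
  calc (1 + (r / 2) ^ 2) ^ z ≤ ((1 + r ^ 2) / 4) ^ z :=
        Real.rpow_le_rpow_of_nonpos (by positivity) (by linarith [sq_nonneg r]) hz
    _ = 4 ^ (-z) * (1 + r ^ 2) ^ z := by
        rw [Real.div_rpow (by positivity) (by norm_num), Real.rpow_neg (by norm_num)]
        ring

lemma one_add_sq_rpow_le_sqrt_two_mul {r : ℝ} (hr : 1 ≤ r) (p : ℝ) :
    (1 + r ^ 2) ^ (-p / 2) ≤ √2 * r * (1 + r ^ 2) ^ (-(p + 1) / 2) := by
  have hpos : 0 < 1 + r ^ 2 := by positivity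
  calc (1 + r ^ 2) ^ (-p / 2) = √(1 + r ^ 2) * (1 + r ^ 2) ^ (-(p + 1) / 2) := by
        rw [Real.sqrt_eq_rpow, ← Real.rpow_add hpos]; ring_nf
    _ ≤ √(2 * r ^ 2) * (1 + r ^ 2) ^ (-(p + 1) / 2) := by
        gcongr; nlinarith
    _ = √2 * r * (1 + r ^ 2) ^ (-(p + 1) / 2) := by
        rw [Real.sqrt_mul (by norm_num), Real.sqrt_sq (by linarith)]

lemma one_le_mul_one_add_sq_rpow_neg {R r q : ℝ} (hq : 0 ≤ q) (hr : |r| ≤ R) :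
    1 ≤ (1 + R ^ 2) ^ q * (1 + r ^ 2) ^ (-q) := by
  have hpos : 0 < 1 + r ^ 2 := by positivity
  rw [Real.rpow_neg hpos.le, ← div_eq_mul_inv, one_le_div (by positivity)]
  exact Real.rpow_le_rpow hpos.le (by nlinarith [sq_abs r, abs_nonneg r]) hq

section HomogF

variable {d : ℕ} {y : Metric.sphere (0 : EuclideanSpace ℝ (Fin d)) 1 → ℂ}

lemma normalize_mem_sphere {t : EuclideanSpace ℝ (Fin d)} (ht : t ≠ 0) :
    NormedSpace.normalize t ∈ Metric.sphere (0 : EuclideanSpace ℝ (Fin d)) 1 :=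
  mem_sphere_zero_iff_norm.mpr (norm_normalize ht)

lemma homogF_of_ne_zero {t : EuclideanSpace ℝ (Fin d)} (ht : t ≠ 0) :
    homogF y t = y ⟨NormedSpace.normalize t, normalize_mem_sphere ht⟩ :=
  dif_pos (normalize_mem_sphere ht)

lemma norm_homogF_le {M : ℝ} (hM : 0 ≤ M) (hyM : ∀ v, ‖y v‖ ≤ M)
    (t : EuclideanSpace ℝ (Fin d)) : ‖homogF y t‖ ≤ M := by
  unfold homogF
  split
  · exact hyM _
  · simpa using hM

lemma measurable_homogF (hy : Continuous y) : Measurable (homogF y) := by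
  have hnormalize : Measurable (NormedSpace.normalize : EuclideanSpace ℝ (Fin d) → _) := by
    unfold NormedSpace.normalize; fun_prop
  set S := NormedSpace.normalize ⁻¹' Metric.sphere (0 : EuclideanSpace ℝ (Fin d)) 1
  have hf : Measurable fun t : S => y ⟨NormedSpace.normalize t.1, t.2⟩ :=
    hy.measurable.comp ((hnormalize.comp measurable_subtype_coe).subtype_mk (h := fun t => t.2))
  exact Measurable.dite hf (measurable_const (a := (0 : ℂ)))
    (Metric.isClosed_sphere.measurableSet.preimage hnormalize)

lemma norm_mul_norm_homogF_sub_le {K : NNReal} (hy : LipschitzWith K y)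
    {a t : EuclideanSpace ℝ (Fin d)} (ha : a ≠ 0) (ht : t ≠ 0) :
    ‖a‖ * ‖homogF y a - homogF y t‖ ≤ 2 * K * ‖a - t‖ := by
  rw [homogF_of_ne_zero ha, homogF_of_ne_zero ht, ← dist_eq_norm]
  calc ‖a‖ * dist (y ⟨_, normalize_mem_sphere ha⟩) (y ⟨_, normalize_mem_sphere ht⟩)
      ≤ ‖a‖ * (K * ‖NormedSpace.normalize a - NormedSpace.normalize t‖) := by
        gcongr
        exact hy.dist_le_mul _ _
    _ = K * (‖a‖ * ‖NormedSpace.normalize a - NormedSpace.normalize t‖) := by ring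
    _ ≤ K * (2 * ‖a - t‖) :=
        mul_le_mul_of_nonneg_left (norm_mul_norm_normalize_sub_normalize_le a t) K.2
    _ = 2 * K * ‖a - t‖ := by ring

noncomputable def weightedHomogF (y : Metric.sphere (0 : EuclideanSpace ℝ (Fin d)) 1 → ℂ)
    (p : ℝ) (t : EuclideanSpace ℝ (Fin d)) : ℂ :=
  homogF y t * (((1 + ‖t‖ ^ 2) ^ (-p / 2) : ℝ) : ℂ)

lemma norm_weightedHomogF_le {M p : ℝ} (hM : 0 ≤ M) (hyM : ∀ v, ‖y v‖ ≤ M) (hp : 0 ≤ p)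
    (t : EuclideanSpace ℝ (Fin d)) : ‖weightedHomogF y p t‖ ≤ M := by
  have hw : (1 + ‖t‖ ^ 2) ^ (-p / 2) ≤ 1 :=
    Real.rpow_le_one_of_one_le_of_nonpos (by nlinarith) (by linarith)
  rw [weightedHomogF, norm_mul, Complex.norm_real, Real.norm_of_nonneg (by positivity)]
  simpa using mul_le_mul (norm_homogF_le hM hyM t) hw (by positivity) hM

lemma integrable_weightedHomogF (hy : Continuous y) {p : ℝ} (hp : 0 ≤ p)
    (μ : Measure (EuclideanSpace ℝ (Fin d))) [IsFiniteMeasure μ] :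
    Integrable (weightedHomogF y p) μ := by
  obtain ⟨M, hM, hyM⟩ := (isCompact_range hy).isBounded.exists_pos_norm_le
  have hmeas : Measurable (weightedHomogF y p) := by
    unfold weightedHomogF
    exact (measurable_homogF hy).mul (by fun_prop)
  exact Integrable.of_bound hmeas.aestronglyMeasurable M (ae_of_all _
    (norm_weightedHomogF_le hM.le (fun v => hyM _ (Set.mem_range_self v)) hp))

lemma norm_weightedHomogF_sub_le_of_far {K : NNReal} (hy : LipschitzWith K y) {M p ρ : ℝ}
    (hM : 0 ≤ M) (hyM : ∀ v, ‖y v‖ ≤ M) (hp : 0 ≤ p) {a t : EuclideanSpace ℝ (Fin d)}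
    (hat : ‖t - a‖ ≤ ρ) (ha : 2 * ρ + 1 ≤ ‖a‖) :
    ‖weightedHomogF y p a - weightedHomogF y p t‖ ≤
      (2 * √2 * K * ρ + M * p * 4 ^ ((p + 1) / 2) * ρ) * (1 + ‖a‖ ^ 2) ^ (-(p + 1) / 2) := by
  have hρ : 0 ≤ ρ := (norm_nonneg _).trans hat
  have hdist : |‖a‖ - ‖t‖| ≤ ρ := by
    rw [abs_sub_comm]; exact (abs_norm_sub_norm_le t a).trans hat
  have hta : ‖a‖ / 2 ≤ ‖t‖ := by linarith [abs_le.mp hdist]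
  have ha0 : a ≠ 0 := norm_pos_iff.mp (by linarith)
  have ht0 : t ≠ 0 := norm_pos_iff.mp (by linarith)
  set w : EuclideanSpace ℝ (Fin d) → ℝ := fun t => (1 + ‖t‖ ^ 2) ^ (-p / 2)
  set W := (1 + ‖a‖ ^ 2) ^ (-(p + 1) / 2)
  have hsplit : weightedHomogF y p a - weightedHomogF y p t =
      (homogF y a - homogF y t) * (w a : ℂ) + homogF y t * ((w a - w t : ℝ) : ℂ) := by
    simp only [weightedHomogF, w]; push_cast; ring
  have hdirection : ‖homogF y a - homogF y t‖ * w a ≤ 2 * √2 * K * ρ * W := by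
    have hhom := norm_mul_norm_homogF_sub_le hy ha0 ht0
    calc ‖homogF y a - homogF y t‖ * w a
        ≤ ‖homogF y a - homogF y t‖ * (√2 * ‖a‖ * W) := by
          gcongr; exact one_add_sq_rpow_le_sqrt_two_mul (by linarith) p
      _ = √2 * W * (‖a‖ * ‖homogF y a - homogF y t‖) := by ring
      _ ≤ √2 * W * (2 * K * ρ) := by
          refine mul_le_mul_of_nonneg_left (hhom.trans ?_) (by positivity)
          rw [norm_sub_rev] at hat
          gcongr
      _ = 2 * √2 * K * ρ * W := by ring
  have hweight : ‖homogF y t‖ * |w a - w t| ≤ M * p * 4 ^ ((p + 1) / 2) * ρ * W := by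
    have hw := abs_one_add_sq_rpow_sub_le (m := ‖a‖ / 2) (r := ‖a‖) hp (by positivity)
      (by linarith) hta
    have hhalf : (1 + (‖a‖ / 2) ^ 2) ^ (-(p + 1) / 2) ≤ 4 ^ ((p + 1) / 2) * W := by
      have := one_add_half_sq_rpow_le (z := -(p + 1) / 2) (by linarith) ‖a‖
      rwa [neg_div, neg_neg, ← neg_div] at this
    calc ‖homogF y t‖ * |w a - w t|
        ≤ M * (p * (4 ^ ((p + 1) / 2) * W) * ρ) := by
          gcongr
          · exact norm_homogF_le hM hyM t
          · exact hw.trans (by gcongr)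
      _ = M * p * 4 ^ ((p + 1) / 2) * ρ * W := by ring
  rw [hsplit]
  calc ‖(homogF y a - homogF y t) * (w a : ℂ) + homogF y t * ((w a - w t : ℝ) : ℂ)‖
      ≤ ‖homogF y a - homogF y t‖ * w a + ‖homogF y t‖ * |w a - w t| := by
        grw [norm_add_le, norm_mul, norm_mul, Complex.norm_real, Complex.norm_real,
          Real.norm_of_nonneg (by positivity), Real.norm_eq_abs]
    _ ≤ _ := by linarith

lemma exists_norm_weightedHomogF_sub_le {K : NNReal} (hy : LipschitzWith K y) {p : ℝ}
    (hp : 0 ≤ p) (ρ : ℝ) :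
    ∃ C : ℝ, ∀ a t : EuclideanSpace ℝ (Fin d), ‖t - a‖ ≤ ρ →
      ‖weightedHomogF y p a - weightedHomogF y p t‖ ≤ C * (1 + ‖a‖ ^ 2) ^ (-(p + 1) / 2) := by
  obtain ⟨M, hM, hyM⟩ := (isCompact_range hy.continuous).isBounded.exists_pos_norm_le
  replace hyM : ∀ v, ‖y v‖ ≤ M := fun v => hyM _ (Set.mem_range_self v)
  set R := 2 * ρ + 1
  set C_far := 2 * √2 * K * ρ + M * p * 4 ^ ((p + 1) / 2) * ρ
  set C_near := 2 * M * (1 + R ^ 2) ^ ((p + 1) / 2)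
  refine ⟨max C_far C_near, fun a t hat => ?_⟩
  rcases le_or_gt R ‖a‖ with hfar | hnear
  · calc _ ≤ C_far * (1 + ‖a‖ ^ 2) ^ (-(p + 1) / 2) :=
          norm_weightedHomogF_sub_le_of_far hy hM.le hyM hp hat hfar
      _ ≤ _ := by gcongr; exact le_max_left _ _
  · have hbound := norm_weightedHomogF_le hM.le hyM hp (y := y)
    have hone : 1 ≤ (1 + R ^ 2) ^ ((p + 1) / 2) * (1 + ‖a‖ ^ 2) ^ (-(p + 1) / 2) := by
      rw [neg_div]
      exact one_le_mul_one_add_sq_rpow_neg (by linarith)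
        (by rw [abs_norm]; exact hnear.le)
    calc ‖weightedHomogF y p a - weightedHomogF y p t‖ ≤ 2 * M := by
          linarith [norm_sub_le (weightedHomogF y p a) (weightedHomogF y p t), hbound a, hbound t]
      _ ≤ 2 * M * ((1 + R ^ 2) ^ ((p + 1) / 2) * (1 + ‖a‖ ^ 2) ^ (-(p + 1) / 2)) := by
          nlinarith
      _ = C_near * (1 + ‖a‖ ^ 2) ^ (-(p + 1) / 2) := by ring
      _ ≤ _ := by gcongr; exact le_max_right _ _

end HomogF

lemma norm_sub_integral_le_of_ae_norm_sub_le {α E : Type*} [MeasurableSpace α]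
    [NormedAddCommGroup E] [NormedSpace ℝ E] [CompleteSpace E] {μ : Measure α}
    [IsProbabilityMeasure μ] {f : α → E}
    (hf : Integrable f μ) {c : E} {B : ℝ} (hB : ∀ᵐ t ∂μ, ‖c - f t‖ ≤ B) :
    ‖c - ∫ t, f t ∂μ‖ ≤ B := by
  have hc : c - ∫ t, f t ∂μ = ∫ t, (c - f t) ∂μ := by
    rw [integral_sub (integrable_const c) hf, integral_const, probReal_univ, one_smul]
  simpa [hc] using norm_integral_le_of_norm_le_const hB

section LatticeCube

variable {d : ℕ}

def latticeCube (n : Fin d → ℤ) : Set (EuclideanSpace ℝ (Fin d)) :=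
  {t | ∀ i, (n i : ℝ) ≤ t i ∧ t i ≤ (n i : ℝ) + 1}

lemma latticeCube_eq_preimage (n : Fin d → ℤ) :
    latticeCube n = (MeasurableEquiv.toLp 2 (Fin d → ℝ)).symm ⁻¹'
      Set.univ.pi fun i => Set.Icc (n i : ℝ) (n i + 1) := by
  ext t
  simp only [latticeCube, Set.mem_preimage, Set.mem_univ_pi, Set.mem_Icc]
  rfl

lemma measurableSet_latticeCube (n : Fin d → ℤ) : MeasurableSet (latticeCube n) := by
  rw [latticeCube_eq_preimage]
  exact (MeasurableEquiv.measurable _) (MeasurableSet.univ_pi fun _ => measurableSet_Icc)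

lemma volume_latticeCube (n : Fin d → ℤ) : volume (latticeCube n) = 1 := by
  rw [latticeCube_eq_preimage,
    (EuclideanSpace.volume_preserving_symm_measurableEquiv_toLp (Fin d)).measure_preimage
      (MeasurableSet.univ_pi fun _ => measurableSet_Icc).nullMeasurableSet,
    volume_pi_pi]
  simp

lemma norm_sub_latticeVec_le {n : Fin d → ℤ} {t : EuclideanSpace ℝ (Fin d)}
    (ht : t ∈ latticeCube n) : ‖t - latticeVec n‖ ≤ √d := by
  rw [EuclideanSpace.norm_eq]
  gcongr
  calc ∑ i, ‖(t - latticeVec n) i‖ ^ 2 ≤ ∑ _i : Fin d, (1 : ℝ) := by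
        gcongr with i
        have hi : (t - latticeVec n) i = t i - n i := by simp [latticeVec]
        rw [hi, Real.norm_eq_abs, sq_abs]
        nlinarith [ht i]
    _ = d := by simp

end LatticeCube

theorem stmt4_general {d : ℕ}
    (y : Metric.sphere (0 : EuclideanSpace ℝ (Fin d)) 1 → ℂ)
    (K : NNReal) (hy : LipschitzWith K y) :
    ∃ C : ℝ, ∀ n : Fin d → ℤ, n ≠ 0 →
      ‖homogF y (latticeVec n) * (((1 + ‖latticeVec n‖ ^ 2) ^ (-(d : ℝ) / 2) : ℝ) : ℂ)
        - ∫ t in {t : EuclideanSpace ℝ (Fin d) |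
              ∀ i, (n i : ℝ) ≤ t i ∧ t i ≤ (n i : ℝ) + 1},
            homogF y t * (((1 + ‖t‖ ^ 2) ^ (-(d : ℝ) / 2) : ℝ) : ℂ) ∂volume‖
        ≤ C * (1 + ‖latticeVec n‖ ^ 2) ^ (-((d : ℝ) + 1) / 2) := by
  obtain ⟨C, hC⟩ := exists_norm_weightedHomogF_sub_le hy d.cast_nonneg √d
  refine ⟨C, fun n _ => ?_⟩
  change ‖weightedHomogF y d (latticeVec n) - ∫ t in latticeCube n, weightedHomogF y d t‖ ≤ _
  have : IsProbabilityMeasure (volume.restrict (latticeCube n)) :=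
    ⟨by simp [volume_latticeCube]⟩
  refine norm_sub_integral_le_of_ae_norm_sub_le (f := weightedHomogF y d)
    (integrable_weightedHomogF hy.continuous d.cast_nonneg _) ?_
  rw [ae_restrict_iff' (measurableSet_latticeCube n)]
  exact ae_of_all _ fun t ht => hC _ _ (norm_sub_latticeVec_le ht)

/-- For `d ≥ 2` and `y : S^{d-1} → ℂ` Lipschitz, there is a constant `C` such
that for every nonzero `n ∈ ℤ^d`,
`| y(n/|n|)(1+|n|²)^{-d/2} − ∫_{n+[0,1]^d} y(t/|t|)(1+|t|²)^{-d/2} dt | ≤ C (1+|n|²)^{-(d+1)/2}`. -/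
theorem stmt4 {d : ℕ} (hd : 2 ≤ d)
    (y : Metric.sphere (0 : EuclideanSpace ℝ (Fin d)) 1 → ℂ)
    (K : NNReal) (hy : LipschitzWith K y) :
    ∃ C : ℝ, ∀ n : Fin d → ℤ, n ≠ 0 →
      ‖homogF y (latticeVec n) * (((1 + ‖latticeVec n‖ ^ 2) ^ (-(d : ℝ) / 2) : ℝ) : ℂ)
        - ∫ t in {t : EuclideanSpace ℝ (Fin d) |
              ∀ i, (n i : ℝ) ≤ t i ∧ t i ≤ (n i : ℝ) + 1},
            homogF y t * (((1 + ‖t‖ ^ 2) ^ (-(d : ℝ) / 2) : ℝ) : ℂ) ∂volume‖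
        ≤ C * (1 + ‖latticeVec n‖ ^ 2) ^ (-((d : ℝ) + 1) / 2) :=
  stmt4_general y K hy
end

section
/- Let d ≥ 2 and let g be an invertible real d×d matrix. Then for every b ∈ C(S^{d−1}), ∫_{S^{d−1}} |g t|^{−d} b(g t / |g t|) dσ(t) = |det g|^{−1} ∫_{S^{d−1}} b dσ; that is, m ∘ V_g = |det g|^{−1} m. -/
open MeasureTheory

attribute [local instance] Classical.propDecidable

/-- The homogeneous (degree-zero) extension to `ℝ^d` of a function on the unit sphere:
`homog b t = b (t / ‖t‖)` for `t ≠ 0`, and `0` at `t = 0`. -/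
noncomputable def homog {d : ℕ}
    (b : C(Metric.sphere (0 : EuclideanSpace ℝ (Fin d)) 1, ℂ))
    (t : EuclideanSpace ℝ (Fin d)) : ℂ :=
  if h : ‖t‖⁻¹ • t ∈ Metric.sphere (0 : EuclideanSpace ℝ (Fin d)) 1 then b ⟨_, h⟩ else 0

/-! Extend `b` to the degree-zero homogeneous function `homog b` and cut it off to the unit ball.
In polar coordinates `x = r • ω`, the integral of `x ↦ 1_{‖L x‖ < 1} · homog b (L x)` over `ℝ^d`
becomes `(1/d) ∫_S ‖L ω‖^{-d} homog b (L ω) dσ`, because the radial integral is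
`∫_0^{1/‖L ω‖} r^{d-1} dr = ‖L ω‖^{-d} / d`. The linear change of variables `x ↦ L x` shows that
the same integral is `|det L|⁻¹` times its value for `L = id`, which is `(1/d) ∫_S b dσ`. -/

open Set Metric Module

theorem LinearMap.measurableEmbedding_of_det_ne_zero {E : Type*} [NormedAddCommGroup E]
    [NormedSpace ℝ E] [FiniteDimensional ℝ E] [MeasurableSpace E] [BorelSpace E]
    {L : E →ₗ[ℝ] E} (hL : LinearMap.det L ≠ 0) : MeasurableEmbedding L :=
  (ContinuousLinearMap.toContinuousLinearEquivOfDetNeZero (LinearMap.toContinuousLinearMap L)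
    hL).toHomeomorph.measurableEmbedding

namespace MeasureTheory

section Polar

variable {E F : Type*} [NormedAddCommGroup E] [NormedSpace ℝ E] [FiniteDimensional ℝ E]
  [MeasurableSpace E] [BorelSpace E] [NormedAddCommGroup F] [NormedSpace ℝ F]
  (μ : Measure E) [μ.IsAddHaarMeasure]

theorem integral_volumeIoiPow (n : ℕ) (φ : ℝ → F) :
    ∫ r : Ioi (0 : ℝ), φ r ∂Measure.volumeIoiPow n = ∫ r in Ioi (0 : ℝ), r ^ n • φ r := by
  simp only [Measure.volumeIoiPow, ENNReal.ofReal]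
  rw [integral_withDensity_eq_integral_smul (measurable_subtype_coe.pow_const _).real_toNNReal,
    integral_subtype_comap measurableSet_Ioi fun r => Real.toNNReal (r ^ n) • φ r]
  refine setIntegral_congr_fun measurableSet_Ioi fun r hr => ?_
  rw [NNReal.smul_def, Real.coe_toNNReal _ (pow_nonneg hr.out.le _)]

theorem integral_eq_integral_toSphere_integral_Ioi [Nontrivial E] {f : E → F}
    (hf : Integrable f μ) :
    ∫ x, f x ∂μ = ∫ ω : sphere (0 : E) 1, (∫ r in Ioi (0 : ℝ),
      r ^ (finrank ℝ E - 1) • f (r • (ω : E))) ∂μ.toSphere := by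
  have he := μ.measurePreserving_homeomorphUnitSphereProd
  have hemb := (homeomorphUnitSphereProd E).measurableEmbedding
  set g : sphere (0 : E) 1 × Ioi (0 : ℝ) → F := fun p => f ((p.2 : ℝ) • (p.1 : E))
  have hge : g ∘ homeomorphUnitSphereProd E = fun x : ({0}ᶜ : Set E) => f x := by
    ext x
    simp [g, smul_inv_smul₀ (norm_ne_zero_iff.2 x.2)]
  have hg : Integrable g (μ.toSphere.prod (Measure.volumeIoiPow (finrank ℝ E - 1))) := by
    rw [← he.integrable_comp_emb hemb, hge]
    exact (integrableOn_iff_comap_subtypeVal (measurableSet_singleton 0).compl).1 hf.integrableOn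
  calc ∫ x, f x ∂μ = ∫ x : ({0}ᶜ : Set E), f x ∂μ.comap (↑) := by
        rw [integral_subtype_comap (measurableSet_singleton _).compl, restrict_compl_singleton]
    _ = ∫ p, g p ∂μ.toSphere.prod (Measure.volumeIoiPow (finrank ℝ E - 1)) := by
        rw [← he.integral_comp hemb, ← hge]; rfl
    _ = _ := by
        rw [integral_prod g hg]
        exact integral_congr_ae (.of_forall fun ω => integral_volumeIoiPow _ fun r => f (r • ω))

end Polar

section Radial

variable {E F : Type*} [NormedAddCommGroup E] [NormedSpace ℝ E] [NormedAddCommGroup F]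
  [NormedSpace ℝ F] [CompleteSpace F]

theorem integral_Ioi_pow_smul_indicator_ball_smul {n : ℕ} (hn : n ≠ 0) {h : E → F}
    (hh : ∀ c : ℝ, 0 < c → ∀ x, h (c • x) = h x) {y : E} (hy : y ≠ 0) :
    ∫ r in Ioi (0 : ℝ), r ^ (n - 1) • (ball (0 : E) 1).indicator h (r • y)
      = ((‖y‖ ^ n)⁻¹ / n) • h y := by
  have hy' : 0 < ‖y‖ := norm_pos_iff.2 hy
  have hcut : EqOn (fun r : ℝ => r ^ (n - 1) • (ball (0 : E) 1).indicator h (r • y))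
      ((Iio ‖y‖⁻¹).indicator fun r => r ^ (n - 1) • h y) (Ioi 0) := by
    intro r (hr : 0 < r)
    have hmem : r • y ∈ ball (0 : E) 1 ↔ r ∈ Iio ‖y‖⁻¹ := by
      rw [mem_ball_zero_iff, norm_smul, Real.norm_of_nonneg hr.le, mem_Iio, inv_eq_one_div,
        lt_div_iff₀ hy']
    by_cases hr' : r ∈ Iio ‖y‖⁻¹
    · simp [indicator_of_mem hr', indicator_of_mem (hmem.2 hr'), hh r hr]
    · simp [indicator_of_notMem hr', indicator_of_notMem (mt hmem.1 hr')]
  rw [setIntegral_congr_fun measurableSet_Ioi hcut, integral_indicator measurableSet_Iio,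
    Measure.restrict_restrict measurableSet_Iio, Iio_inter_Ioi, integral_smul_const,
    ← integral_Ioc_eq_integral_Ioo, ← intervalIntegral.integral_of_le (by positivity),
    integral_pow, Nat.sub_add_cancel (Nat.one_le_iff_ne_zero.2 hn)]
  simp [hn, inv_pow, Nat.cast_pred (Nat.pos_of_ne_zero hn)]

end Radial

section ChangeOfVariables

variable {E F : Type*} [NormedAddCommGroup E] [NormedSpace ℝ E] [FiniteDimensional ℝ E]
  [MeasurableSpace E] [BorelSpace E] [NormedAddCommGroup F]
  (μ : Measure E) [μ.IsAddHaarMeasure] {L : E →ₗ[ℝ] E}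

theorem integral_comp_linearMap [NormedSpace ℝ F] (f : E → F) (hL : LinearMap.det L ≠ 0) :
    ∫ x, f (L x) ∂μ = |(LinearMap.det L)⁻¹| • ∫ x, f x ∂μ := by
  rw [← (L.measurableEmbedding_of_det_ne_zero hL).integral_map,
    μ.map_linearMap_addHaar_eq_smul_addHaar hL, integral_smul_measure,
    ENNReal.toReal_ofReal (abs_nonneg _)]

theorem Integrable.comp_linearMap {f : E → F} (hf : Integrable f μ) (hL : LinearMap.det L ≠ 0) :
    Integrable (fun x => f (L x)) μ := by
  rw [← Function.comp_def, ← (L.measurableEmbedding_of_det_ne_zero hL).integrable_map_iff,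
    μ.map_linearMap_addHaar_eq_smul_addHaar hL]
  exact hf.smul_measure ENNReal.ofReal_ne_top

end ChangeOfVariables

section Sphere

variable {E F : Type*} [NormedAddCommGroup E] [NormedSpace ℝ E] [FiniteDimensional ℝ E]
  [MeasurableSpace E] [BorelSpace E] [NormedAddCommGroup F] [NormedSpace ℝ F] [CompleteSpace F]
  (μ : Measure E) [μ.IsAddHaarMeasure] {h : E → F} {L : E →ₗ[ℝ] E}

theorem integral_indicator_ball_comp_linearMap [Nontrivial E]
    (hint : IntegrableOn h (ball 0 1) μ) (hh : ∀ c : ℝ, 0 < c → ∀ x, h (c • x) = h x)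
    (hL : LinearMap.det L ≠ 0) :
    ∫ x, (ball (0 : E) 1).indicator h (L x) ∂μ = (finrank ℝ E : ℝ)⁻¹ •
      ∫ ω : sphere (0 : E) 1, (‖L ω‖ ^ finrank ℝ E)⁻¹ • h (L ω) ∂μ.toSphere := by
  have hint' := ((integrable_indicator_iff measurableSet_ball).2 hint).comp_linearMap μ hL
  rw [integral_eq_integral_toSphere_integral_Ioi μ hint', ← integral_smul]
  refine integral_congr_ae (.of_forall fun ω => ?_)
  have hLω : L ω ≠ 0 := (map_ne_zero_iff L (L.measurableEmbedding_of_det_ne_zero hL).injective).2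
    (ne_zero_of_mem_unit_sphere ω)
  simp only [map_smul]
  rw [integral_Ioi_pow_smul_indicator_ball_smul finrank_pos.ne' hh hLω, smul_smul, div_eq_inv_mul]

theorem integral_toSphere_comp_linearMap (hint : IntegrableOn h (ball 0 1) μ)
    (hh : ∀ c : ℝ, 0 < c → ∀ x, h (c • x) = h x) (hL : LinearMap.det L ≠ 0) :
    ∫ ω : sphere (0 : E) 1, (‖L ω‖ ^ finrank ℝ E)⁻¹ • h (L ω) ∂μ.toSphere
      = |(LinearMap.det L)⁻¹| • ∫ ω : sphere (0 : E) 1, h ω ∂μ.toSphere := by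
  rcases subsingleton_or_nontrivial E with hE | hE
  · simp [μ.toSphere_eq_zero_iff.2 hE]
  have hid := integral_indicator_ball_comp_linearMap μ hint hh (L := LinearMap.id) (by simp)
  simp only [LinearMap.id_apply, norm_eq_of_mem_sphere, one_pow, inv_one, one_smul] at hid
  have hn : (finrank ℝ E : ℝ)⁻¹ ≠ 0 := by simp [finrank_pos.ne']
  refine smul_right_injective F hn ?_
  dsimp only
  rw [← integral_indicator_ball_comp_linearMap μ hint hh hL, integral_comp_linearMap μ _ hL, hid,
    smul_comm]

end Sphere

end MeasureTheory

section Homog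

variable {d : ℕ} (b : C(sphere (0 : EuclideanSpace ℝ (Fin d)) 1, ℂ))

theorem homog_smul {c : ℝ} (hc : 0 < c) (t : EuclideanSpace ℝ (Fin d)) :
    homog b (c • t) = homog b t := by
  rw [homog, homog, norm_smul, Real.norm_of_nonneg hc.le, mul_inv_rev, smul_smul,
    inv_mul_cancel_right₀ hc.ne']

theorem homog_coe (ω : sphere (0 : EuclideanSpace ℝ (Fin d)) 1) : homog b ω = b ω := by
  simp [homog, norm_eq_of_mem_sphere]

theorem measurable_homog : Measurable (homog b) := by
  have hsmul : Measurable fun t : EuclideanSpace ℝ (Fin d) => ‖t‖⁻¹ • t :=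
    measurable_norm.inv.smul measurable_id
  have hs : MeasurableSet {t : EuclideanSpace ℝ (Fin d) | ‖t‖⁻¹ • t ∈ sphere 0 1} :=
    hsmul isClosed_sphere.measurableSet
  have hb : Measurable fun t : {t : EuclideanSpace ℝ (Fin d) | ‖t‖⁻¹ • t ∈ sphere 0 1} =>
      b ⟨‖(t : EuclideanSpace ℝ (Fin d))‖⁻¹ • (t : EuclideanSpace ℝ (Fin d)), t.2⟩ :=
    b.continuous.measurable.comp (hsmul.comp measurable_subtype_coe).subtype_mk
  exact hb.dite measurable_const hs

theorem integrableOn_ball_homog : IntegrableOn (homog b) (ball 0 1) :=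
  Measure.integrableOn_of_bounded measure_ball_lt_top.ne (measurable_homog b).aestronglyMeasurable
    (M := ‖b‖) (.of_forall fun t => by
      rw [homog]
      split
      · exact b.norm_coe_le_norm _
      · simp)

end Homog

theorem stmt6_general {d : ℕ}
    (g : Matrix (Fin d) (Fin d) ℝ) (hg : g.det ≠ 0)
    (b : C(Metric.sphere (0 : EuclideanSpace ℝ (Fin d)) 1, ℂ)) :
    (∫ t : Metric.sphere (0 : EuclideanSpace ℝ (Fin d)) 1,
        (((‖Matrix.toEuclideanLin g t‖ ^ d)⁻¹ : ℝ) : ℂ) *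
          homog b (Matrix.toEuclideanLin g t)
        ∂((volume : Measure (EuclideanSpace ℝ (Fin d))).toSphere))
      = ((|g.det|⁻¹ : ℝ) : ℂ) *
        ∫ t, b t ∂((volume : Measure (EuclideanSpace ℝ (Fin d))).toSphere) := by
  have hdet : LinearMap.det (Matrix.toEuclideanLin g) = g.det := by
    rw [Matrix.toEuclideanLin_eq_toLin_orthonormal, LinearMap.det_toLin]
  have key := integral_toSphere_comp_linearMap volume (integrableOn_ball_homog b)
    (fun _ hc => homog_smul b hc) (L := Matrix.toEuclideanLin g) (by rwa [hdet])
  simpa only [finrank_euclideanSpace_fin, hdet, homog_coe, abs_inv, Complex.real_smul] using key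

/-- For `d ≥ 2` and `g` an invertible real `d×d` matrix, for every
`b ∈ C(S^{d-1})`:
`∫_{S^{d-1}} |gt|^{-d} b(gt/|gt|) dσ(t) = |det g|⁻¹ ∫_{S^{d-1}} b dσ`,
where `σ` is the rotation-invariant surface measure on the unit sphere. -/
theorem stmt6 {d : ℕ} (hd : 2 ≤ d)
    (g : Matrix (Fin d) (Fin d) ℝ) (hg : g.det ≠ 0)
    (b : C(Metric.sphere (0 : EuclideanSpace ℝ (Fin d)) 1, ℂ)) :
    (∫ t : Metric.sphere (0 : EuclideanSpace ℝ (Fin d)) 1,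
        (((‖Matrix.toEuclideanLin g t‖ ^ d)⁻¹ : ℝ) : ℂ) *
          homog b (Matrix.toEuclideanLin g t)
        ∂((volume : Measure (EuclideanSpace ℝ (Fin d))).toSphere))
      = ((|g.det|⁻¹ : ℝ) : ℂ) *
        ∫ t, b t ∂((volume : Measure (EuclideanSpace ℝ (Fin d))).toSphere) :=
  stmt6_general g hg b
end

section
/- Let d ≥ 2 be even and let l be a continuous linear functional on C(S^{d−1}) such that l(V_g b) = l(b) for every g ∈ Sp(d,ℝ) and every b ∈ C(S^{d−1}). If n ∈ ℕ^d is a multi-index such that at least one entry n_j is odd, then l(b_n) = 0. -/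
/-!
Pick the coordinate pair `(2r, 2r+1)` of `Ω` carrying an odd exponent of `n`, and let
`a = n_{2r}`, `b = n_{2r+1}`. A rotation of that plane, extended by the identity, is symplectic and
orthogonal, so `V_g b_n = b_n ∘ g` and `l (b_n ∘ g) = l b_n`. Average over the rotations by the
`N`-th roots of unity `ω`, with `N > a + b`: in terms of `z = x + iy`, the rotated `x^a y^b` is a
Laurent polynomial in `ω` of degree `≤ a + b < N`, so the average keeps only its constant term, and
the reflection `(p, q) ↦ (a - p, b - q)` of the binomial expansion shows that this term vanishes
when `a` or `b` is odd. Hence `N • l b_n = l 0 = 0`.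
-/

open MeasureTheory

/-- The standard symplectic form matrix `Ω`: block-diagonal with `d/2` diagonal blocks
`((0, 1), (-1, 0))`. -/
def Omega (d : ℕ) : Matrix (Fin d) (Fin d) ℝ :=
  Matrix.of fun i j =>
    if i.val % 2 = 0 ∧ j.val = i.val + 1 then 1
    else if j.val % 2 = 0 ∧ i.val = j.val + 1 then -1
    else 0

attribute [local instance] Classical.propDecidable

open Finset Matrix ComplexConjugate

theorem IsPrimitiveRoot.sum_pow_mul_inv_pow_pow {K : Type*} [Field K] {ζ : K} {N : ℕ}
    (hζ : IsPrimitiveRoot ζ N) {u v : ℕ} (hu : u < N) (hv : v < N) :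
    ∑ m ∈ range N, (ζ ^ u * ζ⁻¹ ^ v) ^ m = if u = v then (N : K) else 0 := by
  have hζ0 : ζ ≠ 0 := hζ.ne_zero (by omega)
  split_ifs with huv
  · simp [huv, mul_inv_cancel₀ (pow_ne_zero v hζ0)]
  · have hρ : ζ ^ u * ζ⁻¹ ^ v ≠ 1 := by
      rw [inv_pow, ← div_eq_mul_inv, Ne, div_eq_one_iff_eq (pow_ne_zero _ hζ0)]
      exact fun h => huv (hζ.pow_inj hu hv h)
    have hρN : (ζ ^ u * ζ⁻¹ ^ v) ^ N = 1 := by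
      rw [mul_pow, ← pow_mul, ← pow_mul, mul_comm u, mul_comm v, pow_mul, pow_mul, inv_pow,
        hζ.pow_eq_one]
      simp
    rw [geom_sum_eq hρ, hρN, sub_self, zero_div]

theorem neg_one_pow_add_neg_one_pow_sub {R : Type*} [Ring R] {b q : ℕ} (hb : Odd b)
    (hq : q ≤ b) : (-1 : R) ^ q + (-1) ^ (b - q) = 0 := by
  rcases Nat.even_or_odd q with hq' | hq'
  · rw [hq'.neg_one_pow, (Nat.Odd.sub_even hq hb hq').neg_one_pow, add_neg_cancel]
  · rw [hq'.neg_one_pow, (Nat.Odd.sub_odd hb hq').neg_one_pow, neg_add_cancel]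

/-- The coefficient of the term `(P ω) ^ p (Q ω⁻¹) ^ (a - p) (P ω) ^ q (-Q ω⁻¹) ^ (b - q)` in the
binomial expansion of `(P ω + Q ω⁻¹) ^ a (P ω - Q ω⁻¹) ^ b`. -/
def laurentCoeff {R : Type*} [CommRing R] (a b : ℕ) (P Q : R) (x : ℕ × ℕ) : R :=
  a.choose x.1 * b.choose x.2 * (-1) ^ (b - x.2) * P ^ (x.1 + x.2) * Q ^ (a - x.1 + (b - x.2))

theorem add_mul_inv_pow_mul_sub_mul_inv_pow {K : Type*} [Field K] (a b : ℕ) (P Q ω : K) :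
    (P * ω + Q * ω⁻¹) ^ a * (P * ω - Q * ω⁻¹) ^ b =
      ∑ x ∈ range (a + 1) ×ˢ range (b + 1),
        laurentCoeff a b P Q x * ω ^ (x.1 + x.2) * ω⁻¹ ^ (a - x.1 + (b - x.2)) := by
  rw [sub_eq_add_neg, add_pow, add_pow, sum_mul_sum, sum_product]
  exact sum_congr rfl fun p _ => sum_congr rfl fun q _ => by rw [laurentCoeff]; ring

theorem sum_ite_laurentCoeff_eq_zero {R : Type*} [CommRing R] {a b : ℕ} (hab : Odd a ∨ Odd b)
    (P Q : R) :
    ∑ x ∈ range (a + 1) ×ˢ range (b + 1),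
      (if x.1 + x.2 = a - x.1 + (b - x.2) then laurentCoeff a b P Q x else 0) = 0 := by
  have hab' : a % 2 = 1 ∨ b % 2 = 1 := by simpa only [Nat.odd_iff] using hab
  refine sum_involution (fun x _ => (a - x.1, b - x.2)) (fun x hx => ?_) (fun x hx hx0 => ?_)
    (fun x hx => ?_) (fun x hx => ?_)
  all_goals obtain ⟨hp, hq⟩ : x.1 ≤ a ∧ x.2 ≤ b := by simpa [Nat.lt_succ_iff] using hx
  · dsimp only
    split_ifs with hd hd' hd'
    · have hb : Odd b := Nat.odd_iff.mpr (by omega)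
      simp only [laurentCoeff, Nat.choose_symm hp, Nat.choose_symm hq, Nat.sub_sub_self hp,
        Nat.sub_sub_self hq, ← hd]
      linear_combination (a.choose x.1 * b.choose x.2 * P ^ (x.1 + x.2) * Q ^ (x.1 + x.2) : R) *
        neg_one_pow_add_neg_one_pow_sub (R := R) hb hq
    · exact absurd (by omega) hd'
    · exact absurd (by omega) hd
    · exact add_zero 0
  · intro hfix
    rw [Prod.ext_iff] at hfix
    split_ifs at hx0 with hd
    · omega
    · exact hx0 rfl
  · simp only [mem_product, mem_range]
    omega
  · ext <;> dsimp only <;> omega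

theorem sum_add_mul_inv_pow_mul_sub_mul_inv_pow_eq_zero {K : Type*} [Field K] {ζ : K} {N a b : ℕ}
    (hζ : IsPrimitiveRoot ζ N) (hN : a + b < N) (hab : Odd a ∨ Odd b) (P Q : K) :
    ∑ m ∈ range N, (P * ζ ^ m + Q * (ζ ^ m)⁻¹) ^ a * (P * ζ ^ m - Q * (ζ ^ m)⁻¹) ^ b = 0 := by
  have average : ∀ x ∈ range (a + 1) ×ˢ range (b + 1),
      ∑ m ∈ range N, laurentCoeff a b P Q x * (ζ ^ m) ^ (x.1 + x.2) *
          (ζ ^ m)⁻¹ ^ (a - x.1 + (b - x.2)) =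
        (if x.1 + x.2 = a - x.1 + (b - x.2) then laurentCoeff a b P Q x else 0) * N := by
    intro x hx
    obtain ⟨hp, hq⟩ : x.1 < a + 1 ∧ x.2 < b + 1 := by simpa using hx
    rw [ite_mul, zero_mul, ← mul_ite_zero, ← hζ.sum_pow_mul_inv_pow_pow (by omega) (by omega),
      mul_sum]
    exact sum_congr rfl fun m _ => by ring
  simp_rw [add_mul_inv_pow_mul_sub_mul_inv_pow a b P Q]
  rw [sum_comm, sum_congr rfl average, ← sum_mul, sum_ite_laurentCoeff_eq_zero hab, zero_mul]

def rotationMatrix (ω : ℂ) : Matrix (Fin 2) (Fin 2) ℝ := !![ω.re, ω.im; -ω.im, ω.re]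

theorem det_rotationMatrix (ω : ℂ) : (rotationMatrix ω).det = Complex.normSq ω := by
  rw [rotationMatrix, det_fin_two_of, Complex.normSq_apply]
  ring

theorem transpose_rotationMatrix_mul_self (ω : ℂ) :
    (rotationMatrix ω)ᵀ * rotationMatrix ω = Complex.normSq ω • 1 := by
  ext i j
  fin_cases i <;> fin_cases j <;>
    simp [rotationMatrix, mul_apply, Fin.sum_univ_two, Complex.normSq_apply] <;> ring

theorem rotationMatrix_mulVec_zero (ω : ℂ) (u : Fin 2 → ℝ) :
    (((rotationMatrix ω *ᵥ u) 0 : ℝ) : ℂ) =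
      ((u 0 - u 1 * Complex.I) * ω + (u 0 + u 1 * Complex.I) * conj ω) / 2 := by
  apply Complex.ext <;> simp [rotationMatrix, mulVec, dotProduct, Fin.sum_univ_two] <;> ring

theorem rotationMatrix_mulVec_one (ω : ℂ) (u : Fin 2 → ℝ) :
    (((rotationMatrix ω *ᵥ u) 1 : ℝ) : ℂ) =
      Complex.I * ((u 0 - u 1 * Complex.I) * ω - (u 0 + u 1 * Complex.I) * conj ω) / 2 := by
  apply Complex.ext <;> simp [rotationMatrix, mulVec, dotProduct, Fin.sum_univ_two]
  ring

theorem sum_rotationMatrix_mulVec_pow_mul_pow_eq_zero {ζ : ℂ} {N a b : ℕ}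
    (hζ : IsPrimitiveRoot ζ N) (hN : a + b < N) (hab : Odd a ∨ Odd b) (u : Fin 2 → ℝ) :
    ∑ m ∈ range N, (rotationMatrix (ζ ^ m) *ᵥ u) 0 ^ a * (rotationMatrix (ζ ^ m) *ᵥ u) 1 ^ b
      = 0 := by
  apply Complex.ofReal_injective
  set P : ℂ := u 0 - u 1 * Complex.I
  set Q : ℂ := u 0 + u 1 * Complex.I
  have hterm : ∀ m, (((rotationMatrix (ζ ^ m) *ᵥ u) 0 ^ a *
      (rotationMatrix (ζ ^ m) *ᵥ u) 1 ^ b : ℝ) : ℂ) = Complex.I ^ b / 2 ^ (a + b) *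
        ((P * ζ ^ m + Q * (ζ ^ m)⁻¹) ^ a * (P * ζ ^ m - Q * (ζ ^ m)⁻¹) ^ b) := by
    intro m
    have hinv : (ζ ^ m)⁻¹ = conj (ζ ^ m) :=
      Complex.inv_eq_conj (by rw [norm_pow, hζ.norm'_eq_one (by omega), one_pow])
    rw [hinv, Complex.ofReal_mul, Complex.ofReal_pow, Complex.ofReal_pow, rotationMatrix_mulVec_zero,
      rotationMatrix_mulVec_one, div_pow, div_pow, mul_pow, pow_add]
    simp only [P, Q]
    ring
  rw [Complex.ofReal_zero, Complex.ofReal_sum, sum_congr rfl fun m _ => hterm m, ← mul_sum,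
    sum_add_mul_inv_pow_mul_sub_mul_inv_pow_eq_zero hζ hN hab, mul_zero]

theorem norm_toEuclideanLin_of_transpose_mul_self {n : Type*} [Fintype n] [DecidableEq n]
    {A : Matrix n n ℝ} (hA : Aᵀ * A = 1) (t : EuclideanSpace ℝ n) :
    ‖toEuclideanLin A t‖ = ‖t‖ := by
  have h : ‖toEuclideanLin A t‖ ^ 2 = ‖t‖ ^ 2 := by
    rw [← real_inner_self_eq_norm_sq, ← real_inner_self_eq_norm_sq, ← LinearMap.adjoint_inner_left,
      ← toEuclideanLin_conjTranspose_eq_adjoint, conjTranspose_eq_transpose_of_trivial]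
    simp only [toLpLin_apply, mulVec_mulVec, hA, one_mulVec]
  exact (pow_left_inj₀ (norm_nonneg _) (norm_nonneg _) two_ne_zero).mp h

section BlockEmbedding

variable {ι n R : Type*} [Fintype ι] [DecidableEq ι] [CommRing R]

def blockEmbedding (e : Fin 2 × ι ≃ n) (r : ι) (U : Matrix (Fin 2) (Fin 2) R) : Matrix n n R :=
  reindex e e (blockDiagonal (Function.update 1 r U))

theorem blockEmbedding_mulVec_apply [Fintype n] (e : Fin 2 × ι ≃ n) (r : ι)
    (U : Matrix (Fin 2) (Fin 2) R) (t : n → R) (i : Fin 2) (r' : ι) :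
    (blockEmbedding e r U *ᵥ t) (e (i, r')) =
      if r' = r then (U *ᵥ fun i' => t (e (i', r))) i else t (e (i, r')) := by
  rw [blockEmbedding, reindex_apply, submatrix_mulVec_equiv]
  split_ifs with h
  · subst h
    simp [mulVec, dotProduct, Fintype.sum_prod_type_right, blockDiagonal_apply']
  · simp [mulVec, dotProduct, Fintype.sum_prod_type_right, blockDiagonal_apply', h,
      Function.update_of_ne, one_apply]

theorem prod_blockEmbedding_mulVec_pow [Fintype n] (e : Fin 2 × ι ≃ n) (r : ι)
    (U : Matrix (Fin 2) (Fin 2) R) (t : n → R) (ν : n → ℕ) :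
    ∏ j, (blockEmbedding e r U *ᵥ t) j ^ ν j =
      (∏ i, (U *ᵥ fun i' => t (e (i', r))) i ^ ν (e (i, r))) *
        ∏ r' ∈ univ.erase r, ∏ i, t (e (i, r')) ^ ν (e (i, r')) := by
  rw [← e.prod_comp, Fintype.prod_prod_type_right, ← mul_prod_erase univ _ (mem_univ r)]
  congr 1
  · simp [blockEmbedding_mulVec_apply]
  · refine prod_congr rfl fun r' hr' => ?_
    simp [blockEmbedding_mulVec_apply, ne_of_mem_erase hr']

theorem transpose_blockEmbedding_mul_mul [Fintype n] (e : Fin 2 × ι ≃ n) (r : ι)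
    {U Q : Matrix (Fin 2) (Fin 2) R} (hU : Uᵀ * Q * U = Q) :
    (blockEmbedding e r U)ᵀ * reindex e e (blockDiagonal fun _ => Q) * blockEmbedding e r U =
      reindex e e (blockDiagonal fun _ => Q) := by
  simp only [blockEmbedding, reindex_apply, transpose_submatrix, submatrix_mul_equiv,
    blockDiagonal_transpose, ← blockDiagonal_mul]
  congr 2
  funext r'
  rcases eq_or_ne r' r with rfl | hr
  · simpa using hU
  · simp [Function.update_of_ne hr]

theorem transpose_blockEmbedding_mul_self [Fintype n] [DecidableEq n] (e : Fin 2 × ι ≃ n) (r : ι)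
    {U : Matrix (Fin 2) (Fin 2) R} (hU : Uᵀ * U = 1) :
    (blockEmbedding e r U)ᵀ * blockEmbedding e r U = 1 := by
  have h := transpose_blockEmbedding_mul_mul e r (U := U) (Q := 1) (by rwa [mul_one])
  rwa [← Pi.one_def, blockDiagonal_one, reindex_apply, submatrix_one_equiv, mul_one] at h

end BlockEmbedding

theorem norm_toEuclideanLin_blockEmbedding_rotationMatrix {ι n : Type*} [Fintype ι] [DecidableEq ι]
    [Fintype n] [DecidableEq n] (e : Fin 2 × ι ≃ n) (r : ι) {ω : ℂ} (hω : ‖ω‖ = 1)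
    (t : EuclideanSpace ℝ n) :
    ‖toEuclideanLin (blockEmbedding e r (rotationMatrix ω)) t‖ = ‖t‖ := by
  refine norm_toEuclideanLin_of_transpose_mul_self (transpose_blockEmbedding_mul_self e r ?_) t
  rw [transpose_rotationMatrix_mul_self, Complex.normSq_eq_norm_sq, hω, one_pow, one_smul]

theorem sum_prod_blockEmbedding_rotationMatrix_mulVec_pow_eq_zero {ι n : Type*} [Fintype ι]
    [DecidableEq ι] [Fintype n] {ζ : ℂ} {N : ℕ} (hζ : IsPrimitiveRoot ζ N) (e : Fin 2 × ι ≃ n)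
    (r : ι) (ν : n → ℕ) (hN : ν (e (0, r)) + ν (e (1, r)) < N)
    (hodd : Odd (ν (e (0, r))) ∨ Odd (ν (e (1, r)))) (t : n → ℝ) :
    ∑ m ∈ range N, ∏ j, (blockEmbedding e r (rotationMatrix (ζ ^ m)) *ᵥ t) j ^ ν j = 0 := by
  simp_rw [prod_blockEmbedding_mulVec_pow, Fin.prod_univ_two]
  rw [← sum_mul, sum_rotationMatrix_mulVec_pow_mul_pow_eq_zero hζ hN hodd, zero_mul]

theorem transpose_mul_Omega_two_mul (A : Matrix (Fin 2) (Fin 2) ℝ) :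
    Aᵀ * Omega 2 * A = A.det • Omega 2 := by
  ext i j
  fin_cases i <;> fin_cases j <;> simp [Omega, mul_apply, Fin.sum_univ_two, det_fin_two] <;> ring

def finPairEquiv {d k : ℕ} (h : d = 2 * k) : Fin 2 × Fin k ≃ Fin d where
  toFun x := ⟨x.1 + 2 * x.2, by omega⟩
  invFun j := (⟨j % 2, by omega⟩, ⟨j / 2, by omega⟩)
  left_inv x := by ext <;> simp <;> omega
  right_inv j := by ext; simp; omega

theorem Omega_eq_reindex_blockDiagonal {d k : ℕ} (h : d = 2 * k) :
    Omega d = reindex (finPairEquiv h) (finPairEquiv h) (blockDiagonal fun _ => Omega 2) := by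
  ext i j
  obtain ⟨⟨p, r⟩, rfl⟩ := (finPairEquiv h).surjective i
  obtain ⟨⟨q, s⟩, rfl⟩ := (finPairEquiv h).surjective j
  simp only [reindex_apply, submatrix_apply, Equiv.symm_apply_apply, blockDiagonal_apply]
  fin_cases p <;> fin_cases q <;> simp [Omega, finPairEquiv, Fin.ext_iff] <;> split_ifs <;>
    first | rfl | (exfalso; omega)

theorem transpose_blockEmbedding_rotationMatrix_mul_Omega_mul {d k : ℕ} (h : d = 2 * k) (r : Fin k)
    {ω : ℂ} (hω : ‖ω‖ = 1) :
    (blockEmbedding (finPairEquiv h) r (rotationMatrix ω))ᵀ * Omega d *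
      blockEmbedding (finPairEquiv h) r (rotationMatrix ω) = Omega d := by
  rw [Omega_eq_reindex_blockDiagonal h]
  refine transpose_blockEmbedding_mul_mul _ r ?_
  rw [transpose_mul_Omega_two_mul, det_rotationMatrix, Complex.normSq_eq_norm_sq, hω, one_pow,
    one_smul]

theorem homog_of_mem_sphere {d : ℕ} (b : C(Metric.sphere (0 : EuclideanSpace ℝ (Fin d)) 1, ℂ))
    {t : EuclideanSpace ℝ (Fin d)} (ht : t ∈ Metric.sphere (0 : EuclideanSpace ℝ (Fin d)) 1) :
    homog b t = b ⟨t, ht⟩ := by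
  have ht' : ‖t‖⁻¹ • t = t := by rw [mem_sphere_zero_iff_norm.mp ht, inv_one, one_smul]
  rw [homog, dif_pos (ht'.symm ▸ ht)]
  congr 1
  exact Subtype.ext ht'

def sphereMap {E : Type*} [NormedAddCommGroup E] [NormedSpace ℝ E] [FiniteDimensional ℝ E]
    (f : E →ₗ[ℝ] E) (hf : ∀ t, ‖f t‖ = ‖t‖) :
    C(Metric.sphere (0 : E) 1, Metric.sphere (0 : E) 1) where
  toFun t := ⟨f t, by rw [mem_sphere_zero_iff_norm, hf, ← mem_sphere_zero_iff_norm]; exact t.2⟩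
  continuous_toFun := (f.continuous_of_finiteDimensional.comp continuous_subtype_val).subtype_mk _

theorem comp_sphereMap_apply {d : ℕ} (b : C(Metric.sphere (0 : EuclideanSpace ℝ (Fin d)) 1, ℂ))
    {f : EuclideanSpace ℝ (Fin d) →ₗ[ℝ] EuclideanSpace ℝ (Fin d)} (hf : ∀ t, ‖f t‖ = ‖t‖)
    (t : Metric.sphere (0 : EuclideanSpace ℝ (Fin d)) 1) :
    b.comp (sphereMap f hf) t = (((‖f t‖ ^ d)⁻¹ : ℝ) : ℂ) * homog b (f t) := by
  rw [hf, mem_sphere_zero_iff_norm.mp t.2, one_pow, inv_one, Complex.ofReal_one, one_mul,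
    homog_of_mem_sphere]
  rfl

theorem stmt9_general {d : ℕ} (hdeven : Even d)
    (l : C(Metric.sphere (0 : EuclideanSpace ℝ (Fin d)) 1, ℂ) →L[ℂ] ℂ)
    (hl : ∀ g : Matrix (Fin d) (Fin d) ℝ, g.transpose * Omega d * g = Omega d →
      ∀ b c : C(Metric.sphere (0 : EuclideanSpace ℝ (Fin d)) 1, ℂ),
        (∀ t : Metric.sphere (0 : EuclideanSpace ℝ (Fin d)) 1,
          c t = (((‖Matrix.toEuclideanLin g t‖ ^ d)⁻¹ : ℝ) : ℂ) *
            homog b (Matrix.toEuclideanLin g t)) →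
        l c = l b)
    (n : Fin d → ℕ) (hodd : ∃ j, Odd (n j))
    (bn : C(Metric.sphere (0 : EuclideanSpace ℝ (Fin d)) 1, ℂ))
    (hbn : ∀ t : Metric.sphere (0 : EuclideanSpace ℝ (Fin d)) 1,
      bn t = ∏ k : Fin d, (((t : EuclideanSpace ℝ (Fin d)) k : ℝ) : ℂ) ^ n k) :
    l bn = 0 := by
  obtain ⟨k, hk⟩ := hdeven.two_dvd
  set e := finPairEquiv hk
  obtain ⟨j, hj⟩ := hodd
  obtain ⟨⟨i, r⟩, rfl⟩ := e.surjective j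
  have hpair : Odd (n (e (0, r))) ∨ Odd (n (e (1, r))) := by
    fin_cases i
    exacts [Or.inl hj, Or.inr hj]
  set N := n (e (0, r)) + n (e (1, r)) + 1
  obtain ⟨ζ, hζ⟩ : ∃ ζ : ℂ, IsPrimitiveRoot ζ N := ⟨_, Complex.isPrimitiveRoot_exp N (by omega)⟩
  have hunit : ∀ m, ‖ζ ^ m‖ = 1 := fun m => by rw [norm_pow, hζ.norm'_eq_one (by omega), one_pow]
  set g := fun m => blockEmbedding e r (rotationMatrix (ζ ^ m))
  have hiso := fun m => norm_toEuclideanLin_blockEmbedding_rotationMatrix e r (hunit m)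
  set c := fun m => bn.comp (sphereMap _ (hiso m))
  have hinv : ∀ m, l (c m) = l bn := fun m =>
    hl (g m) (transpose_blockEmbedding_rotationMatrix_mul_Omega_mul hk r (hunit m)) bn (c m)
      (comp_sphereMap_apply bn (hiso m))
  have hsum : ∑ m ∈ range N, c m = 0 := by
    ext t
    simp only [c, ContinuousMap.coe_sum, ContinuousMap.coe_comp, Finset.sum_apply,
      Function.comp_apply, sphereMap, ContinuousMap.coe_mk, hbn, toLpLin_apply,
      ContinuousMap.zero_apply]
    exact_mod_cast sum_prod_blockEmbedding_rotationMatrix_mulVec_pow_eq_zero hζ e r n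
      (by omega) hpair _
  have hN : (N : ℂ) * l bn = 0 := calc
    (N : ℂ) * l bn = ∑ m ∈ range N, l (c m) := by simp [hinv]
    _ = 0 := by rw [← map_sum, hsum, map_zero]
  exact (mul_eq_zero.mp hN).resolve_left (Nat.cast_ne_zero.mpr (by omega))

/-- Let `d ≥ 2` be even and `l` a continuous linear functional on
`C(S^{d-1})` invariant under `V_g` for every `g ∈ Sp(d,ℝ)`. If `n ∈ ℕ^d` is a multi-index
with at least one odd entry, then `l(b_n) = 0`, where `b_n(t) = ∏ k, t_k ^ n_k`. -/
theorem stmt9 {d : ℕ} (hd : 2 ≤ d) (hdeven : Even d)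
    (l : C(Metric.sphere (0 : EuclideanSpace ℝ (Fin d)) 1, ℂ) →L[ℂ] ℂ)
    (hl : ∀ g : Matrix (Fin d) (Fin d) ℝ, g.transpose * Omega d * g = Omega d →
      ∀ b c : C(Metric.sphere (0 : EuclideanSpace ℝ (Fin d)) 1, ℂ),
        (∀ t : Metric.sphere (0 : EuclideanSpace ℝ (Fin d)) 1,
          c t = (((‖Matrix.toEuclideanLin g t‖ ^ d)⁻¹ : ℝ) : ℂ) *
            homog b (Matrix.toEuclideanLin g t)) →
        l c = l b)
    (n : Fin d → ℕ) (hodd : ∃ j, Odd (n j))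
    (bn : C(Metric.sphere (0 : EuclideanSpace ℝ (Fin d)) 1, ℂ))
    (hbn : ∀ t : Metric.sphere (0 : EuclideanSpace ℝ (Fin d)) 1,
      bn t = ∏ k : Fin d, (((t : EuclideanSpace ℝ (Fin d)) k : ℝ) : ℂ) ^ n k) :
    l bn = 0 :=
  stmt9_general hdeven l hl n hodd bn hbn
end

section
/- Let d ≥ 2 be even and let l be a continuous linear functional on C(S^{d−1}) such that l(V_g b) = l(b) for every g ∈ Sp(d,ℝ) and every b ∈ C(S^{d−1}). Then for every polynomial function b on ℝ^d and every A ∈ sp(d,ℝ), l vanishes on the restriction to S^{d−1} of the function (π(A)b)(t) = ⟨∇b(t) − ⟨∇b(t), t⟩ t, A t⟩ − d ⟨A t, t⟩ b(t); that is, l(π(A)b) = 0. -/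
open MeasureTheory

attribute [local instance] Classical.propDecidable

/-!
For `A ∈ sp(d,ℝ)` the matrices `exp (s • A)` are symplectic (the relation `Ω A = -Aᵀ Ω` passes to
the exponential series), so by invariance `s ↦ l (V_{exp (s A)} b)` is constant. Now
`V_g b (t) = h (g t)`, where `h` is the extension of `b|_{S^{d-1}}` homogeneous of degree `-d`. The
partial derivative `Dh (exp (s A) t) (A exp (s A) t)` of `(s, t) ↦ h (exp (s A) t)` is jointly
continuous on `ℝ × S^{d-1}`, and `S^{d-1}` is compact, so the curve `s ↦ V_{exp (s A)} b` is
differentiable in the sup norm, with derivative `t ↦ Dh (t) (A t)` at `s = 0`. For `|t| = 1`,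
`Dh (t) v = ⟨∇b(t), v - ⟨v, t⟩ t⟩ - d ⟨v, t⟩ b(t)`, which for `v = A t` is `π(A) b (t)`. Hence
`l (π(A) b)` is the derivative at `0` of a constant function.
-/

open NormedSpace
open scoped Matrix

theorem hasStrictFDerivAt_norm {F : Type*} [NormedAddCommGroup F] [InnerProductSpace ℝ F]
    {x : F} (hx : x ≠ 0) : HasStrictFDerivAt (‖·‖) (‖x‖⁻¹ • innerSL ℝ x) x := by
  have h := (hasStrictFDerivAt_norm_sq x).sqrt (by positivity)
  simp only [Real.sqrt_sq (norm_nonneg _)] at h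
  refine h.congr_fderiv ?_
  ext v
  simp only [one_div, mul_inv_rev, smul_apply, coe_innerSL_apply, nsmul_eq_mul, Nat.cast_ofNat,
    smul_eq_mul]
  field_simp

theorem MvPolynomial.hasFDerivAt_eval_continuousLinearMap {𝕜 E B σ : Type*}
    [NontriviallyNormedField 𝕜] [NormedAddCommGroup E] [NormedSpace 𝕜 E]
    [NormedCommRing B] [NormedAlgebra 𝕜 B] [Fintype σ]
    (f : σ → E →L[𝕜] B) (p : MvPolynomial σ B) (x : E) :
    HasFDerivAt (fun x ↦ eval (f · x) p) (∑ i, eval (f · x) (pderiv i p) • f i) x := by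
  induction p using MvPolynomial.induction_on with
  | C a =>
    simp only [eval_C]
    exact (hasFDerivAt_const (𝕜 := 𝕜) a x).congr_fderiv (by ext; simp)
  | add p q hp hq =>
    simp only [map_add]
    exact (hp.add hq).congr_fderiv (by ext; simp [add_mul, Finset.sum_add_distrib])
  | mul_X p i hp =>
    simp only [map_mul, eval_X]
    refine (hp.mul (f i).hasFDerivAt).congr_fderiv ?_
    ext v
    simp [Pi.single_apply, mul_add, Finset.sum_add_distrib, Finset.mul_sum, apply_ite (eval _),
      mul_comm, mul_left_comm]

theorem ContinuousMap.hasDerivAt_curry {X E : Type*} [TopologicalSpace X] [CompactSpace X]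
    [NormedAddCommGroup E] [NormedSpace ℝ E] {F F' : C(ℝ × X, E)}
    (hF : ∀ s x, HasDerivAt (fun s ↦ F (s, x)) (F' (s, x)) s) (s₀ : ℝ) :
    HasDerivAt F.curry (F'.curry s₀) s₀ := by
  rw [hasDerivAt_iff_isLittleO, Asymptotics.isLittleO_iff]
  intro ε hε
  obtain ⟨δ, hδ, hclose⟩ :=
    Metric.continuousAt_iff.mp (F'.curry.continuous.continuousAt (x := s₀)) ε hε
  filter_upwards [Metric.ball_mem_nhds s₀ hδ] with s hs
  refine (ContinuousMap.norm_le _ (by positivity)).mpr fun x ↦ ?_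
  -- `F'.curry` is continuous for the sup norm, so the mean value bound below is uniform in `x`
  have hderiv : ∀ σ ∈ Metric.ball s₀ δ, HasDerivWithinAt (fun σ ↦ F (σ, x) - σ • F' (s₀, x))
      (F' (σ, x) - F' (s₀, x)) (Metric.ball s₀ δ) σ := fun σ _ ↦
    ((hF σ x).sub (hasDerivAt_id σ |>.smul_const _) |>.congr_deriv (by simp)).hasDerivWithinAt
  have hbound : ∀ σ ∈ Metric.ball s₀ δ, ‖F' (σ, x) - F' (s₀, x)‖ ≤ ε := fun σ hσ ↦
    ((F'.curry σ - F'.curry s₀).norm_coe_le_norm x).trans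
      (by rw [← dist_eq_norm]; exact (hclose hσ).le)
  have := (convex_ball s₀ δ).norm_image_sub_le_of_norm_hasDerivWithin_le hderiv hbound
    (Metric.mem_ball_self hδ) hs
  refine (congrArg norm ?_).trans_le this
  simp only [sub_smul, sub_apply, curry_apply, coe_smul, Pi.smul_apply]
  abel

section ExpFlow

variable {E : Type*} [NormedAddCommGroup E] [NormedSpace ℝ E] [CompleteSpace E] (T : E →L[ℝ] E)

theorem hasDerivAt_exp_smul_apply (x : E) (s : ℝ) :
    HasDerivAt (fun s : ℝ ↦ exp (s • T) x) (T (exp (s • T) x)) s := by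
  simpa using (hasDerivAt_exp_smul_const' T s).clm_apply (hasDerivAt_const s x)

theorem continuous_exp_smul_apply : Continuous fun q : ℝ × E ↦ exp (q.1 • T) q.2 := by
  let +nondep : NormedAlgebra ℚ (E →L[ℝ] E) := .restrictScalars ℚ ℝ _
  exact (exp_continuous.comp (continuous_fst.smul continuous_const)).clm_apply continuous_snd

theorem exp_smul_apply_ne_zero {x : E} (hx : x ≠ 0) (s : ℝ) : exp (s • T) x ≠ 0 := by
  let +nondep : NormedAlgebra ℚ (E →L[ℝ] E) := .restrictScalars ℚ ℝ _
  have hinv : exp (-(s • T)) * exp (s • T) = 1 := by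
    refine (exp_add_of_commute (Commute.refl (s • T)).neg_left).symm.trans ?_
    rw [neg_add_cancel, exp_zero]
  intro h
  exact hx (by simpa [h] using congr($hinv x).symm)

end ExpFlow

theorem exists_hasDerivAt_comp_exp_smul_apply {E F : Type*} [NormedAddCommGroup E]
    [NormedSpace ℝ E] [ProperSpace E] [NormedAddCommGroup F] [NormedSpace ℝ F]
    (T : E →L[ℝ] E) {h : E → F} (hh : ∀ y ≠ 0, ContDiffAt ℝ 1 h y)
    (c : C(Metric.sphere (0 : E) 1, F)) (hc : ∀ x, c x = fderiv ℝ h x (T x)) :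
    ∃ γ : ℝ → C(Metric.sphere (0 : E) 1, F),
      (∀ s x, γ s x = h (exp (s • T) x)) ∧ HasDerivAt γ c 0 := by
  have hflow : ∀ q : ℝ × Metric.sphere (0 : E) 1, exp (q.1 • T) q.2 ∈ ({0}ᶜ : Set E) :=
    fun q ↦ exp_smul_apply_ne_zero T (ne_zero_of_mem_unit_sphere q.2) q.1
  have hcont : ∀ ψ : E → F, ContinuousOn ψ {0}ᶜ →
      Continuous fun q : ℝ × Metric.sphere (0 : E) 1 ↦ ψ (exp (q.1 • T) q.2) := fun ψ hψ ↦
    hψ.comp_continuous ((continuous_exp_smul_apply T).comp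
      (continuous_fst.prodMk (continuous_subtype_val.comp continuous_snd))) hflow
  have hC1 : ContDiffOn ℝ 1 h {0}ᶜ := fun y hy ↦ (hh y hy).contDiffWithinAt
  let Φ : C(ℝ × Metric.sphere (0 : E) 1, F) := ⟨_, hcont h hC1.continuousOn⟩
  let Φ' : C(ℝ × Metric.sphere (0 : E) 1, F) :=
    ⟨_, hcont (fun y ↦ fderiv ℝ h y (T y))
      ((hC1.continuousOn_fderiv_of_isOpen isOpen_compl_singleton le_rfl).clm_apply
        T.continuous.continuousOn)⟩
  have hΦ' : Φ'.curry 0 = c := by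
    ext x
    simp [Φ', hc]
  refine ⟨Φ.curry, fun _ _ ↦ rfl, hΦ' ▸ ContinuousMap.hasDerivAt_curry (fun s x ↦ ?_) 0⟩
  exact ((hh _ (hflow (s, x))).differentiableAt one_ne_zero).hasFDerivAt.comp_hasDerivAt s
    (hasDerivAt_exp_smul_apply T x s)

theorem Matrix.exp_transpose_mul_mul_exp {m 𝔸 : Type*} [Fintype m] [DecidableEq m]
    [NormedCommRing 𝔸] [NormedAlgebra ℚ 𝔸] [CompleteSpace 𝔸] {M A : Matrix m m 𝔸}
    (h : M * A + Aᵀ * M = 0) : (exp A)ᵀ * M * exp A = M := by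
  have hsc : SemiconjBy M A (-Aᵀ) := by
    rw [SemiconjBy, Matrix.neg_mul, eq_neg_iff_add_eq_zero, h]
  rw [← Matrix.exp_transpose, ← neg_neg Aᵀ]
  -- `exp` does not depend on the norm; any matrix norm gives access to the Banach-algebra lemma
  open scoped Matrix.Norms.Operator in
  exact @SemiconjBy.exp_neg_mul_mul_exp_eq_self (Matrix m m 𝔸) _ _
    (inferInstanceAs (CompleteSpace (m → m → 𝔸))) _ _ _ hsc

theorem Matrix.toEuclideanLin_exp_apply {n : Type*} [Fintype n] [DecidableEq n]
    (M : Matrix n n ℝ) (x : EuclideanSpace ℝ n) :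
    Matrix.toEuclideanLin (exp M) x = exp (Matrix.toEuclideanCLM (𝕜 := ℝ) M) x := by
  open scoped Matrix.Norms.Operator in
  rw [← map_exp (Matrix.toEuclideanCLM (𝕜 := ℝ) (n := n)) (Matrix.toEuclideanCLM (𝕜 := ℝ)
    (n := n)).toAlgEquiv.toLinearMap.continuous_of_finiteDimensional]
  rfl

section HomogeneousExtension

variable {E : Type*} [NormedAddCommGroup E] [InnerProductSpace ℝ E]

/-- The extension of `p` restricted to the unit sphere that is homogeneous of degree `-n`; in the
notation of the paper, `V_g b (t) = homogeneousExtension d b (g t)`. -/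
noncomputable def homogeneousExtension (n : ℕ) (p : E → ℂ) (y : E) : ℂ :=
  ((‖y‖ ^ n)⁻¹ : ℝ) * p (‖y‖⁻¹ • y)

theorem contDiffAt_homogeneousExtension {k : WithTop ℕ∞} {p : E → ℂ} (hp : ContDiff ℝ k p)
    (n : ℕ) {y : E} (hy : y ≠ 0) : ContDiffAt ℝ k (homogeneousExtension n p) y := by
  have hnorm : ContDiffAt ℝ k (‖·‖) y := contDiffAt_norm ℝ hy
  have hy' : ‖y‖ ≠ 0 := norm_ne_zero_iff.mpr hy
  exact (Complex.ofRealCLM.contDiff.contDiffAt.comp y ((hnorm.pow n).inv (pow_ne_zero n hy'))).mul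
    (hp.contDiffAt.comp y ((hnorm.inv hy').smul contDiffAt_id))

theorem hasFDerivAt_homogeneousExtension {p : E → ℂ} {p' : E →L[ℝ] ℂ} {x : E}
    (hp : HasFDerivAt p p' x) (hx : ‖x‖ = 1) (n : ℕ) :
    HasFDerivAt (homogeneousExtension n p)
      (p' ∘L (ContinuousLinearMap.id ℝ E - (innerSL ℝ x).smulRight x) -
        (n * p x) • (Complex.ofRealCLM ∘L innerSL ℝ x)) x := by
  have hx0 : x ≠ 0 := norm_ne_zero_iff.mp (by simp [hx])
  have hnorm : HasFDerivAt (‖·‖) (innerSL ℝ x) x := by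
    simpa [hx] using (hasStrictFDerivAt_norm hx0).hasFDerivAt
  have hinv : HasFDerivAt (fun y : E ↦ ‖y‖⁻¹) (-innerSL ℝ x) x :=
    ((hasFDerivAt_inv (by simp [hx])).comp x hnorm).congr_fderiv (by ext; simp [hx])
  have hscale : HasFDerivAt (fun y : E ↦ (((‖y‖ ^ n)⁻¹ : ℝ) : ℂ))
      (-(n : ℂ) • (Complex.ofRealCLM ∘L innerSL ℝ x)) x := by
    simp only [← inv_pow]
    exact (Complex.ofRealCLM.hasFDerivAt.comp x (hinv.pow n)).congr_fderiv (by ext; simp [hx])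
  have hdir : HasFDerivAt (fun y : E ↦ ‖y‖⁻¹ • y)
      (ContinuousLinearMap.id ℝ E - (innerSL ℝ x).smulRight x) x :=
    (hinv.smul (hasFDerivAt_id x)).congr_fderiv <| by
      ext
      simp only [hx, inv_one, one_smul, add_apply, ContinuousLinearMap.id_apply,
        ContinuousLinearMap.smulRight_apply, neg_apply, coe_innerSL_apply, neg_smul, sub_apply]
      abel
  have hp' : HasFDerivAt p p' (‖x‖⁻¹ • x) := by rwa [hx, inv_one, one_smul]
  refine (hscale.mul (HasFDerivAt.comp (f := fun y : E ↦ ‖y‖⁻¹ • y) x hp' hdir)).congr_fderiv ?_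
  ext v
  simp only [hx, one_pow, inv_one, Complex.ofReal_one, ContinuousLinearMap.comp_sub,
    ContinuousLinearMap.comp_id, one_smul, Function.comp_apply, add_apply, sub_apply,
    ContinuousLinearMap.comp_apply,
    ContinuousLinearMap.smulRight_apply, coe_innerSL_apply, map_smul, Complex.real_smul,
    smul_apply, Complex.ofRealCLM_apply, smul_eq_mul, neg_mul, mul_neg]
  ring

end HomogeneousExtension

theorem homogeneousExtension_eq_mul_homog {d n : ℕ} {p : EuclideanSpace ℝ (Fin d) → ℂ}
    (b : C(Metric.sphere (0 : EuclideanSpace ℝ (Fin d)) 1, ℂ)) (hb : ∀ x, b x = p x)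
    {y : EuclideanSpace ℝ (Fin d)} (hy : y ≠ 0) :
    homogeneousExtension n p y = (((‖y‖ ^ n)⁻¹ : ℝ) : ℂ) * homog b y := by
  have hmem : ‖y‖⁻¹ • y ∈ Metric.sphere (0 : EuclideanSpace ℝ (Fin d)) 1 := by
    simp [norm_smul, hy]
  rw [homog, dif_pos hmem, hb]
  rfl

noncomputable def evalOfReal {d : ℕ} (P : MvPolynomial (Fin d) ℂ)
    (x : EuclideanSpace ℝ (Fin d)) : ℂ :=
  MvPolynomial.eval (fun i ↦ (x i : ℂ)) P

theorem hasFDerivAt_evalOfReal {d : ℕ} (P : MvPolynomial (Fin d) ℂ)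
    (x : EuclideanSpace ℝ (Fin d)) :
    HasFDerivAt (evalOfReal P) (∑ i, evalOfReal (MvPolynomial.pderiv i P) x •
      (Complex.ofRealCLM ∘L EuclideanSpace.proj i)) x := by
  have h := MvPolynomial.hasFDerivAt_eval_continuousLinearMap
    (fun i ↦ Complex.ofRealCLM ∘L EuclideanSpace.proj i) P x
  refine h.congr_fderiv ?_
  ext v
  simp [evalOfReal]

theorem contDiff_evalOfReal {d : ℕ} {k : WithTop ℕ∞} (P : MvPolynomial (Fin d) ℂ) :
    ContDiff ℝ k (evalOfReal P) := by
  have h : evalOfReal P = fun x ↦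
      MvPolynomial.eval (fun i ↦ (Complex.ofRealCLM ∘L EuclideanSpace.proj i) x) P := by
    funext x
    simp [evalOfReal]
  rw [h]
  exact (AnalyticOnNhd.eval_continuousLinearMap' _ P).contDiff

theorem fderiv_homogeneousExtension_evalOfReal_apply {d : ℕ} (n : ℕ)
    (P : MvPolynomial (Fin d) ℂ) {x : EuclideanSpace ℝ (Fin d)} (hx : ‖x‖ = 1)
    (v : EuclideanSpace ℝ (Fin d)) :
    fderiv ℝ (homogeneousExtension n (evalOfReal P)) x v =
      ∑ j, (evalOfReal (MvPolynomial.pderiv j P) x -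
          (∑ i, evalOfReal (MvPolynomial.pderiv i P) x * (x i : ℂ)) * (x j : ℂ)) * (v j : ℂ) -
        n * (∑ j, (v j : ℂ) * (x j : ℂ)) * evalOfReal P x := by
  rw [(hasFDerivAt_homogeneousExtension (hasFDerivAt_evalOfReal P x) hx n).fderiv]
  simp only [ContinuousLinearMap.comp_sub, ContinuousLinearMap.comp_id, sub_apply, sum_apply,
    smul_apply, ContinuousLinearMap.comp_apply, PiLp.proj_apply, Complex.ofRealCLM_apply,
    smul_eq_mul, ContinuousLinearMap.smulRight_apply, coe_innerSL_apply, PiLp.inner_apply,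
    RCLike.inner_apply, Real.ringHom_apply, map_smul, Complex.real_smul, Complex.ofReal_sum,
    Complex.ofReal_mul, Finset.mul_sum, Finset.sum_mul, map_sum, sub_mul, Finset.sum_sub_distrib]
  congr 1
  · congr 1
    rw [Finset.sum_comm]
    exact Finset.sum_congr rfl fun _ _ ↦ Finset.sum_congr rfl fun _ _ ↦ by ring
  · exact Finset.sum_congr rfl fun _ _ ↦ by ring

theorem stmt11_general {d : ℕ}
    (l : C(Metric.sphere (0 : EuclideanSpace ℝ (Fin d)) 1, ℂ) →L[ℂ] ℂ)
    (hl : ∀ g : Matrix (Fin d) (Fin d) ℝ, g.transpose * Omega d * g = Omega d →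
      ∀ b c : C(Metric.sphere (0 : EuclideanSpace ℝ (Fin d)) 1, ℂ),
        (∀ t : Metric.sphere (0 : EuclideanSpace ℝ (Fin d)) 1,
          c t = (((‖Matrix.toEuclideanLin g t‖ ^ d)⁻¹ : ℝ) : ℂ) *
            homog b (Matrix.toEuclideanLin g t)) →
        l c = l b)
    (P : MvPolynomial (Fin d) ℂ)
    (A : Matrix (Fin d) (Fin d) ℝ)
    (hA : Omega d * A + A.transpose * Omega d = 0)
    (c : C(Metric.sphere (0 : EuclideanSpace ℝ (Fin d)) 1, ℂ))
    (hc : ∀ t : Metric.sphere (0 : EuclideanSpace ℝ (Fin d)) 1,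
      c t =
        (∑ j : Fin d,
          (MvPolynomial.eval
              (fun i => (((t : EuclideanSpace ℝ (Fin d)) i : ℝ) : ℂ)) (MvPolynomial.pderiv j P)
            - (∑ i : Fin d,
                MvPolynomial.eval
                    (fun i' => (((t : EuclideanSpace ℝ (Fin d)) i' : ℝ) : ℂ))
                    (MvPolynomial.pderiv i P) *
                  (((t : EuclideanSpace ℝ (Fin d)) i : ℝ) : ℂ)) *
              (((t : EuclideanSpace ℝ (Fin d)) j : ℝ) : ℂ)) *
          (((Matrix.toEuclideanLin A t : EuclideanSpace ℝ (Fin d)) j : ℝ) : ℂ))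
        - (d : ℂ) *
          (∑ j : Fin d,
            (((Matrix.toEuclideanLin A t : EuclideanSpace ℝ (Fin d)) j : ℝ) : ℂ) *
              (((t : EuclideanSpace ℝ (Fin d)) j : ℝ) : ℂ)) *
          MvPolynomial.eval
            (fun i => (((t : EuclideanSpace ℝ (Fin d)) i : ℝ) : ℂ)) P) :
    l c = 0 := by
  set T := Matrix.toEuclideanCLM (𝕜 := ℝ) A
  obtain ⟨γ, hγ, hγ'⟩ := exists_hasDerivAt_comp_exp_smul_apply T
    (fun y hy ↦ contDiffAt_homogeneousExtension (contDiff_evalOfReal P) d hy) c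
    (fun x ↦ by
      rw [hc, fderiv_homogeneousExtension_evalOfReal_apply _ _ (norm_eq_of_mem_sphere x)]
      rfl)
  let b : C(Metric.sphere (0 : EuclideanSpace ℝ (Fin d)) 1, ℂ) :=
    ⟨fun x ↦ evalOfReal P x,
      (contDiff_evalOfReal (k := 0) P).continuous.comp continuous_subtype_val⟩
  have hsymp : ∀ s : ℝ, Omega d * (s • A) + (s • A)ᵀ * Omega d = 0 := fun s ↦ by
    rw [Matrix.transpose_smul, Matrix.mul_smul, Matrix.smul_mul, ← smul_add, hA, smul_zero]
  have hconst : ∀ s, l (γ s) = l b := fun s ↦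
    hl _ (Matrix.exp_transpose_mul_mul_exp (hsymp s)) b (γ s) fun t ↦ by
      rw [hγ, Matrix.toEuclideanLin_exp_apply, map_smul,
        homogeneousExtension_eq_mul_homog b (fun _ ↦ rfl)
          (exp_smul_apply_ne_zero T (ne_zero_of_mem_unit_sphere t) s)]
  have hderiv := (l.restrictScalars ℝ).hasFDerivAt.comp_hasDerivAt 0 hγ'
  simp only [Function.comp_def, ContinuousLinearMap.coe_restrictScalars', hconst] at hderiv
  exact hderiv.unique (hasDerivAt_const 0 (l b))

/-- Let `d ≥ 2` be even and `l` a continuous linear functional on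
`C(S^{d-1})` invariant under `V_g` for every `g ∈ Sp(d,ℝ)`. Then for every polynomial
function `b` on `ℝ^d` (given by a multivariate polynomial `P`) and every `A ∈ sp(d,ℝ)`,
`l` vanishes on the restriction to `S^{d-1}` of
`(π(A)b)(t) = ⟨∇b(t) − ⟨∇b(t),t⟩t, At⟩ − d⟨At,t⟩b(t)`. -/
theorem stmt11 {d : ℕ} (hd : 2 ≤ d) (hdeven : Even d)
    (l : C(Metric.sphere (0 : EuclideanSpace ℝ (Fin d)) 1, ℂ) →L[ℂ] ℂ)
    (hl : ∀ g : Matrix (Fin d) (Fin d) ℝ, g.transpose * Omega d * g = Omega d →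
      ∀ b c : C(Metric.sphere (0 : EuclideanSpace ℝ (Fin d)) 1, ℂ),
        (∀ t : Metric.sphere (0 : EuclideanSpace ℝ (Fin d)) 1,
          c t = (((‖Matrix.toEuclideanLin g t‖ ^ d)⁻¹ : ℝ) : ℂ) *
            homog b (Matrix.toEuclideanLin g t)) →
        l c = l b)
    (P : MvPolynomial (Fin d) ℂ)
    (A : Matrix (Fin d) (Fin d) ℝ)
    (hA : Omega d * A + A.transpose * Omega d = 0)
    (c : C(Metric.sphere (0 : EuclideanSpace ℝ (Fin d)) 1, ℂ))
    (hc : ∀ t : Metric.sphere (0 : EuclideanSpace ℝ (Fin d)) 1,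
      c t =
        (∑ j : Fin d,
          (MvPolynomial.eval
              (fun i => (((t : EuclideanSpace ℝ (Fin d)) i : ℝ) : ℂ)) (MvPolynomial.pderiv j P)
            - (∑ i : Fin d,
                MvPolynomial.eval
                    (fun i' => (((t : EuclideanSpace ℝ (Fin d)) i' : ℝ) : ℂ))
                    (MvPolynomial.pderiv i P) *
                  (((t : EuclideanSpace ℝ (Fin d)) i : ℝ) : ℂ)) *
              (((t : EuclideanSpace ℝ (Fin d)) j : ℝ) : ℂ)) *
          (((Matrix.toEuclideanLin A t : EuclideanSpace ℝ (Fin d)) j : ℝ) : ℂ))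
        - (d : ℂ) *
          (∑ j : Fin d,
            (((Matrix.toEuclideanLin A t : EuclideanSpace ℝ (Fin d)) j : ℝ) : ℂ) *
              (((t : EuclideanSpace ℝ (Fin d)) j : ℝ) : ℂ)) *
          MvPolynomial.eval
            (fun i => (((t : EuclideanSpace ℝ (Fin d)) i : ℝ) : ℂ)) P) :
    l c = 0 :=
  stmt11_general l hl P A hA c hc
end

section
/- Let d ≥ 2 be even and let l be a continuous linear functional on C(S^{d−1}) such that l(V_g b) = l(b) for every g ∈ Sp(d,ℝ) and every b ∈ C(S^{d−1}). Then for every multi-index n ∈ ℕ^d with n_j ≥ 1 for all j, and every k with 1 ≤ k ≤ d, (‖n‖₁ + d) · l(b_{n + 2e_k}) = (n_k + 1) · l(b_n), where ‖n‖₁ = Σ_{j=1}^d n_j. -/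
open MeasureTheory

attribute [local instance] Classical.propDecidable

/-!
The transvections `gₛ = 1 + s E_{k k'}`, where `k'` is the partner of `k` in the block
structure of `Ω`, lie in `Sp(d,ℝ)`. On a monomial, `V_{gₛ} b_m = b_m + s G(s, ·)` with `G`
jointly continuous in `(s, t)`, so invariance gives `l (G(s, ·)) = 0` for `s ≠ 0`, and by
continuity also for `s = 0`. Now `G(0, ·) = mₖ t_{k'} t^{m - eₖ} - (|m| + d) tₖ t_{k'} t^m` is the
derivative of `s ↦ V_{gₛ} b_m` at `0`, and for `m = n + eₖ - e_{k'}` it equals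
`(nₖ + 1) b_n - (|n| + d) b_{n + 2eₖ}`.
-/

open Matrix Finset

local notation "𝕊" d:max => Metric.sphere (0 : EuclideanSpace ℝ (Fin d)) 1

lemma Omega_transpose (d : ℕ) : (Omega d)ᵀ = -Omega d := by
  ext i j
  simp only [Omega, transpose_apply, of_apply, Matrix.neg_apply]
  split_ifs <;> first | omega | norm_num

theorem transvection_transpose_mul_mul_self {n R : Type*} [Fintype n] [DecidableEq n]
    [CommRing R] {A : Matrix n n R} (hA : Aᵀ = -A) {k k' : n} (hkk : k' ≠ k)
    (hrow : ∀ j, j ≠ k' → A k j = 0) (c : R) :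
    (transvection k k' c)ᵀ * A * transvection k k' c = A := by
  have hcol : ∀ i, i ≠ k' → A i k = 0 := fun i hi => by
    rw [← neg_eq_zero, ← Matrix.neg_apply, ← hA, transpose_apply, hrow i hi]
  have hanti : A k' k = -A k k' := by rw [← Matrix.neg_apply, ← hA, transpose_apply]
  simp only [transvection, transpose_add, transpose_one, transpose_single, Matrix.add_mul,
    Matrix.mul_add, Matrix.one_mul, Matrix.mul_one, single_mul_mul_single, hrow k hkk.symm]
  ext i j
  by_cases hi : i = k' <;> by_cases hj : j = k' <;> simp [hi, hj, hcol, hrow, hanti]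
  ring

lemma exists_Omega_row_support {d : ℕ} (hd : Even d) (k : Fin d) :
    ∃ k', k' ≠ k ∧ ∀ j, j ≠ k' → Omega d k j = 0 := by
  obtain ⟨r, hr⟩ := hd
  have hk := k.isLt
  by_cases h : k.val % 2 = 0
  · refine ⟨⟨k + 1, by omega⟩, fun h' => ?_, fun j hj => ?_⟩
    · simp [Fin.ext_iff] at h'
    · have : j.val ≠ k + 1 := fun e => hj (Fin.ext e)
      simp only [Omega, of_apply]
      split_ifs <;> first | rfl | omega
  · refine ⟨⟨k - 1, by omega⟩, fun h' => ?_, fun j hj => ?_⟩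
    · simp [Fin.ext_iff] at h'; omega
    · have : j.val ≠ k - 1 := fun e => hj (Fin.ext e)
      simp only [Omega, of_apply]
      split_ifs <;> first | rfl | omega

lemma mul_prod_pow_eq_prod_pow_add_single {ι R : Type*} [Fintype ι] [DecidableEq ι]
    [CommMonoid R] (x : ι → R) (e : ι → ℕ) (j : ι) :
    x j * ∏ i, x i ^ e i = ∏ i, x i ^ (e + Pi.single j 1 : ι → ℕ) i := by
  simp only [Pi.add_apply, pow_add, prod_mul_distrib, Pi.single_apply, pow_ite, pow_one, pow_zero,
    prod_ite_eq', mem_univ, if_true, mul_comm]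

section Shear

variable {d : ℕ}

noncomputable def shear (k k' : Fin d) (s : ℝ) (t : EuclideanSpace ℝ (Fin d)) :
    EuclideanSpace ℝ (Fin d) :=
  t + (s * t k') • EuclideanSpace.single k 1

lemma shear_apply (k k' : Fin d) (s : ℝ) (t : EuclideanSpace ℝ (Fin d)) (i : Fin d) :
    shear k k' s t i = t i + if i = k then s * t k' else 0 := by
  simp [shear, PiLp.single_apply]

lemma toEuclideanLin_transvection (k k' : Fin d) (s : ℝ) :
    ⇑(toEuclideanLin (transvection k k' s)) = shear k k' s := by
  ext t i
  simp [toLpLin_apply, transvection, single_mulVec, Function.update_apply, shear_apply]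

lemma norm_shear_sq (k k' : Fin d) (s : ℝ) (t : EuclideanSpace ℝ (Fin d)) :
    ‖shear k k' s t‖ ^ 2 = ‖t‖ ^ 2 + s * (t k' * (2 * t k + s * t k')) := by
  rw [shear, norm_add_sq_real, real_inner_smul_right, EuclideanSpace.inner_single_right,
    norm_smul, PiLp.norm_single]
  simp only [conj_trivial, one_mul, norm_one, mul_one, Real.norm_eq_abs, sq_abs]
  ring

lemma shear_ne_zero {k k' : Fin d} (hkk : k' ≠ k) (s : ℝ) {t : EuclideanSpace ℝ (Fin d)}
    (ht : t ≠ 0) : shear k k' s t ≠ 0 := by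
  intro h
  have htk' : t k' = 0 := by simpa [shear_apply, hkk] using congr($h k')
  simp [shear, htk', ht] at h

end Shear

lemma inv_pow_eq_one_sub {r s u : ℝ} (hr : 0 < r) (h : r ^ 2 = 1 + s * u) (p : ℕ) :
    (r ^ p)⁻¹ = 1 - s * (u * (∑ j ∈ range p, r ^ j) / ((1 + r) * r ^ p)) := by
  have hg := geom_sum_mul r p
  field_simp
  linear_combination (1 + r) * hg - (∑ j ∈ range p, r ^ j) * h

section DiffQuot

variable {d : ℕ}

-- With `r = ‖gₛ t‖`, `r² - 1 = s t_{k'} (2tₖ + s t_{k'})` on the unit sphere, so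
-- `(r ^ p)⁻¹ - 1 = -(r² - 1) (∑ j < p, r ^ j) / ((1 + r) r ^ p)`; together with the geometric
-- sum for `(gₛ t)ₖ ^ mₖ - tₖ ^ mₖ` this divides `(‖gₛ t‖ ^ p)⁻¹ (gₛ t)^m - t^m` by `s`
-- without a singularity at `s = 0`.
noncomputable def shearDiffQuot (k k' : Fin d) (m : Fin d → ℕ) (p : ℕ) (s : ℝ)
    (t : EuclideanSpace ℝ (Fin d)) : ℝ :=
  -(t k' * (2 * t k + s * t k') * (∑ j ∈ range p, ‖shear k k' s t‖ ^ j)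
      / ((1 + ‖shear k k' s t‖) * ‖shear k k' s t‖ ^ p)) * ∏ i, shear k k' s t i ^ m i
    + t k' * (∑ j ∈ range (m k), shear k k' s t k ^ j * t k ^ (m k - 1 - j))
      * ∏ i ∈ univ.erase k, t i ^ m i

lemma prod_shear_pow (k k' : Fin d) (m : Fin d → ℕ) (s : ℝ) (t : EuclideanSpace ℝ (Fin d)) :
    ∏ i, shear k k' s t i ^ m i = shear k k' s t k ^ m k * ∏ i ∈ univ.erase k, t i ^ m i := by
  rw [← mul_prod_erase _ _ (mem_univ k)]
  congr 1
  refine prod_congr rfl fun i hi => ?_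
  rw [shear_apply, if_neg (ne_of_mem_erase hi), add_zero]

lemma inv_norm_pow_mul_prod_shear_pow {k k' : Fin d} (hkk : k' ≠ k) (m : Fin d → ℕ) (p : ℕ)
    (s : ℝ) {t : EuclideanSpace ℝ (Fin d)} (ht : ‖t‖ = 1) :
    (‖shear k k' s t‖ ^ p)⁻¹ * ∏ i, shear k k' s t i ^ m i
      = ∏ i, t i ^ m i + s * shearDiffQuot k k' m p s t := by
  have hr : 0 < ‖shear k k' s t‖ :=
    norm_pos_iff.mpr (shear_ne_zero hkk s (norm_ne_zero_iff.mp (by simp [ht])))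
  have hr2 := norm_shear_sq k k' s t
  rw [ht, one_pow] at hr2
  have hwk : shear k k' s t k = t k + s * t k' := by simp [shear_apply]
  have hgeom := geom_sum₂_mul (shear k k' s t k) (t k) (m k)
  rw [inv_pow_eq_one_sub hr hr2 p, shearDiffQuot, prod_shear_pow,
    ← mul_prod_erase univ (fun i => t i ^ m i) (mem_univ k)]
  rw [hwk] at hgeom ⊢
  linear_combination -(∏ i ∈ univ.erase k, t i ^ m i) * hgeom

lemma shearDiffQuot_zero (k k' : Fin d) (m : Fin d → ℕ) (p : ℕ) {t : EuclideanSpace ℝ (Fin d)}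
    (ht : ‖t‖ = 1) :
    shearDiffQuot k k' m p 0 t
      = m k * (t k' * ∏ i, t i ^ (m - Pi.single k 1 : Fin d → ℕ) i)
        - p * (t k * (t k' * ∏ i, t i ^ m i)) := by
  have hshear : shear k k' 0 t = t := by simp [shear]
  have hsum : ∑ j ∈ range (m k), t k ^ j * t k ^ (m k - 1 - j) = m k * t k ^ (m k - 1) := by
    rw [sum_congr rfl (g := fun _ => t k ^ (m k - 1)), sum_const, card_range, nsmul_eq_mul]
    intro j hj
    rw [← pow_add, Nat.add_sub_of_le (by have := mem_range.mp hj; omega)]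
  have hlow : ∏ i, t i ^ (m - Pi.single k 1 : Fin d → ℕ) i
      = t k ^ (m k - 1) * ∏ i ∈ univ.erase k, t i ^ m i := by
    rw [← mul_prod_erase _ _ (mem_univ k)]
    congr 1
    · simp
    · exact prod_congr rfl fun i hi => by simp [ne_of_mem_erase hi]
  rw [shearDiffQuot, hshear, ht, hsum, hlow,
    ← mul_prod_erase univ (fun i => t i ^ m i) (mem_univ k)]
  simp
  ring

lemma continuous_shearDiffQuot {k k' : Fin d} (hkk : k' ≠ k) (m : Fin d → ℕ) (p : ℕ) :
    Continuous fun x : ℝ × 𝕊 d => shearDiffQuot k k' m p x.1 x.2 := by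
  have hw : Continuous fun x : ℝ × 𝕊 d => shear k k' x.1 x.2 := by
    unfold shear; fun_prop
  have hpos : ∀ x : ℝ × 𝕊 d, (1 + ‖shear k k' x.1 x.2‖) * ‖shear k k' x.1 x.2‖ ^ p ≠ 0 :=
    fun x =>
    have := norm_pos_iff.mpr (shear_ne_zero hkk x.1 (ne_zero_of_mem_unit_sphere x.2))
    by positivity
  unfold shearDiffQuot
  fun_prop (disch := exact hpos _)

end DiffQuot

section Functional

variable {d : ℕ}

noncomputable def sphereMonomial (m : Fin d → ℕ) : C(𝕊 d, ℂ) where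
  toFun t := ∏ i, (((t : EuclideanSpace ℝ (Fin d)) i : ℝ) : ℂ) ^ m i
  continuous_toFun := by fun_prop

lemma sphereMonomial_add_single (m : Fin d → ℕ) (j : Fin d) (t : 𝕊 d) :
    sphereMonomial (m + Pi.single j 1) t
      = ((t : EuclideanSpace ℝ (Fin d)) j : ℂ) * sphereMonomial m t :=
  (mul_prod_pow_eq_prod_pow_add_single _ m j).symm

lemma homog_sphereMonomial (m : Fin d → ℕ) {v : EuclideanSpace ℝ (Fin d)} (hv : v ≠ 0) :
    homog (sphereMonomial m) v = (((‖v‖ ^ ∑ i, m i)⁻¹ * ∏ i, v i ^ m i : ℝ) : ℂ) := by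
  have hmem : ‖v‖⁻¹ • v ∈ 𝕊 d := by
    rw [mem_sphere_zero_iff_norm, norm_smul, norm_inv, norm_norm,
      inv_mul_cancel₀ (norm_ne_zero_iff.mpr hv)]
  rw [homog, dif_pos hmem]
  simp [sphereMonomial, mul_pow, prod_mul_distrib, prod_pow_eq_pow_sum]

-- `c` is `V_g b`: `c t = ‖g t‖⁻ᵈ b (g t / ‖g t‖)`.
def IsSymplecticInvariant (l : C(𝕊 d, ℂ) →L[ℂ] ℂ) : Prop :=
  ∀ g : Matrix (Fin d) (Fin d) ℝ, gᵀ * Omega d * g = Omega d →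
    ∀ b c : C(𝕊 d, ℂ),
      (∀ t : 𝕊 d,
        c t = (((‖toEuclideanLin g t‖ ^ d)⁻¹ : ℝ) : ℂ) * homog b (toEuclideanLin g t)) →
      l c = l b

lemma transvection_action_sphereMonomial {k k' : Fin d} (hkk : k' ≠ k) (m : Fin d → ℕ) (s : ℝ)
    (t : 𝕊 d) :
    (((‖toEuclideanLin (transvection k k' s) t‖ ^ d)⁻¹ : ℝ) : ℂ)
        * homog (sphereMonomial m) (toEuclideanLin (transvection k k' s) t)
      = sphereMonomial m t + s * shearDiffQuot k k' m (∑ i, m i + d) s t := by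
  have ht : ‖(t : EuclideanSpace ℝ (Fin d))‖ = 1 := norm_eq_of_mem_sphere t
  rw [toEuclideanLin_transvection, homog_sphereMonomial m (shear_ne_zero hkk s
    (ne_zero_of_mem_unit_sphere t)), ← Complex.ofReal_mul, ← mul_assoc, ← mul_inv, ← pow_add,
    add_comm d, inv_norm_pow_mul_prod_shear_pow hkk m _ s ht]
  simp [sphereMonomial]

theorem IsSymplecticInvariant.natCast_mul_map_sphereMonomial {l : C(𝕊 d, ℂ) →L[ℂ] ℂ}
    (hl : IsSymplecticInvariant l) {k k' : Fin d} (hkk : k' ≠ k)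
    (hrow : ∀ j, j ≠ k' → Omega d k j = 0) (m : Fin d → ℕ) :
    (m k : ℂ) * l (sphereMonomial (m - Pi.single k 1 + Pi.single k' 1))
      = ((∑ i, m i + d : ℕ) : ℂ) * l (sphereMonomial (m + Pi.single k 1 + Pi.single k' 1)) := by
  set p := ∑ i, m i + d
  let G : C(ℝ × 𝕊 d, ℂ) :=
    ⟨fun x => (shearDiffQuot k k' m p x.1 x.2 : ℂ),
      Complex.continuous_ofReal.comp (continuous_shearDiffQuot hkk m p)⟩
  have hvanish : ∀ s ≠ 0, l (G.curry s) = 0 := by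
    intro s hs
    have hinv := hl _ (transvection_transpose_mul_mul_self (Omega_transpose d) hkk hrow s)
      (sphereMonomial m) (sphereMonomial m + (s : ℂ) • G.curry s)
      fun t => (transvection_action_sphereMonomial hkk m s t).symm
    rw [map_add, map_smul, smul_eq_mul, add_eq_left] at hinv
    exact (mul_eq_zero.mp hinv).resolve_left (Complex.ofReal_ne_zero.mpr hs)
  have hvanish0 : l (G.curry 0) = 0 :=
    congrFun ((l.continuous.comp G.curry.continuous).ext_on (dense_compl_singleton 0)
      continuous_const hvanish) 0
  have hG0 : G.curry 0 = (m k : ℂ) • sphereMonomial (m - Pi.single k 1 + Pi.single k' 1)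
      - (p : ℂ) • sphereMonomial (m + Pi.single k 1 + Pi.single k' 1) := by
    ext t
    simp only [ContinuousMap.sub_apply, ContinuousMap.smul_apply, smul_eq_mul,
      sphereMonomial_add_single, ContinuousMap.curry_apply, G, ContinuousMap.coe_mk,
      shearDiffQuot_zero k k' m p (norm_eq_of_mem_sphere t)]
    simp only [sphereMonomial, ContinuousMap.coe_mk]
    push_cast
    ring
  rw [hG0, map_sub, map_smul, map_smul, smul_eq_mul, smul_eq_mul, sub_eq_zero] at hvanish0
  exact hvanish0

theorem IsSymplecticInvariant.map_sphereMonomial_add_two_single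
    {l : C(𝕊 d, ℂ) →L[ℂ] ℂ} (hl : IsSymplecticInvariant l) {k k' : Fin d} (hkk : k' ≠ k)
    (hrow : ∀ j, j ≠ k' → Omega d k j = 0) (n : Fin d → ℕ) (hn : 1 ≤ n k') :
    (((∑ j, n j : ℕ) : ℂ) + d) * l (sphereMonomial (n + Pi.single k 2))
      = ((n k : ℂ) + 1) * l (sphereMonomial n) := by
  set m := n - Pi.single k' 1 + Pi.single k 1
  have hlow : m - Pi.single k 1 + Pi.single k' 1 = n := by
    ext i
    simp only [m, Pi.add_apply, Pi.sub_apply, Pi.single_apply]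
    split_ifs <;> subst_vars <;> omega
  have hhigh : m + Pi.single k 1 + Pi.single k' 1 = n + Pi.single k 2 := by
    ext i
    simp only [m, Pi.add_apply, Pi.sub_apply, Pi.single_apply]
    split_ifs <;> subst_vars <;> omega
  have hmk : m k = n k + 1 := by simp [m, hkk.symm]
  have hsum : ∑ i, m i = ∑ i, n i := by
    have hshift : m + Pi.single k' 1 = n + Pi.single k 1 := by
      ext i
      simp only [m, Pi.add_apply, Pi.sub_apply, Pi.single_apply]
      split_ifs <;> subst_vars <;> omega
    simpa [sum_add_distrib] using congrArg (fun e => ∑ i, e i) hshift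
  have key := hl.natCast_mul_map_sphereMonomial hkk hrow m
  rw [hlow, hhigh, hmk, hsum] at key
  simp only [Nat.cast_add, Nat.cast_one] at key
  linear_combination -key

end Functional

theorem stmt13_general {d : ℕ} (hdeven : Even d)
    (l : C(Metric.sphere (0 : EuclideanSpace ℝ (Fin d)) 1, ℂ) →L[ℂ] ℂ)
    (hl : ∀ g : Matrix (Fin d) (Fin d) ℝ, g.transpose * Omega d * g = Omega d →
      ∀ b c : C(Metric.sphere (0 : EuclideanSpace ℝ (Fin d)) 1, ℂ),
        (∀ t : Metric.sphere (0 : EuclideanSpace ℝ (Fin d)) 1,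
          c t = (((‖Matrix.toEuclideanLin g t‖ ^ d)⁻¹ : ℝ) : ℂ) *
            homog b (Matrix.toEuclideanLin g t)) →
        l c = l b)
    (n : Fin d → ℕ) (hn : ∀ j, 1 ≤ n j) (k : Fin d)
    (bn bnk : C(Metric.sphere (0 : EuclideanSpace ℝ (Fin d)) 1, ℂ))
    (hbn : ∀ t : Metric.sphere (0 : EuclideanSpace ℝ (Fin d)) 1,
      bn t = ∏ i : Fin d, (((t : EuclideanSpace ℝ (Fin d)) i : ℝ) : ℂ) ^ n i)
    (hbnk : ∀ t : Metric.sphere (0 : EuclideanSpace ℝ (Fin d)) 1,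
      bnk t = ∏ i : Fin d, (((t : EuclideanSpace ℝ (Fin d)) i : ℝ) : ℂ) ^
        (n i + if i = k then 2 else 0)) :
    (((∑ j : Fin d, n j : ℕ) : ℂ) + (d : ℂ)) * l bnk = ((n k : ℂ) + 1) * l bn := by
  obtain ⟨k', hkk, hrow⟩ := exists_Omega_row_support hdeven k
  have hbn_eq : bn = sphereMonomial n := ContinuousMap.ext hbn
  have hbnk_eq : bnk = sphereMonomial (n + Pi.single k 2) := by
    ext t
    simp [hbnk, sphereMonomial, Pi.single_apply]
  rw [hbn_eq, hbnk_eq]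
  exact IsSymplecticInvariant.map_sphereMonomial_add_two_single hl hkk hrow n (hn k')

/-- Let `d ≥ 2` be even and `l` a continuous linear functional on
`C(S^{d-1})` invariant under `V_g` for every `g ∈ Sp(d,ℝ)`. Then for every multi-index
`n ∈ ℕ^d` with all entries `≥ 1` and every `k`:
`(‖n‖₁ + d)·l(b_{n+2e_k}) = (n_k + 1)·l(b_n)`, where `b_m(t) = ∏ i, t_i ^ m_i` and
`‖n‖₁ = ∑ j, n_j`. -/
theorem stmt13 {d : ℕ} (hd : 2 ≤ d) (hdeven : Even d)
    (l : C(Metric.sphere (0 : EuclideanSpace ℝ (Fin d)) 1, ℂ) →L[ℂ] ℂ)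
    (hl : ∀ g : Matrix (Fin d) (Fin d) ℝ, g.transpose * Omega d * g = Omega d →
      ∀ b c : C(Metric.sphere (0 : EuclideanSpace ℝ (Fin d)) 1, ℂ),
        (∀ t : Metric.sphere (0 : EuclideanSpace ℝ (Fin d)) 1,
          c t = (((‖Matrix.toEuclideanLin g t‖ ^ d)⁻¹ : ℝ) : ℂ) *
            homog b (Matrix.toEuclideanLin g t)) →
        l c = l b)
    (n : Fin d → ℕ) (hn : ∀ j, 1 ≤ n j) (k : Fin d)
    (bn bnk : C(Metric.sphere (0 : EuclideanSpace ℝ (Fin d)) 1, ℂ))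
    (hbn : ∀ t : Metric.sphere (0 : EuclideanSpace ℝ (Fin d)) 1,
      bn t = ∏ i : Fin d, (((t : EuclideanSpace ℝ (Fin d)) i : ℝ) : ℂ) ^ n i)
    (hbnk : ∀ t : Metric.sphere (0 : EuclideanSpace ℝ (Fin d)) 1,
      bnk t = ∏ i : Fin d, (((t : EuclideanSpace ℝ (Fin d)) i : ℝ) : ℂ) ^
        (n i + if i = k then 2 else 0)) :
    (((∑ j : Fin d, n j : ℕ) : ℂ) + (d : ℂ)) * l bnk = ((n k : ℂ) + 1) * l bn :=
  stmt13_general hdeven l hl n hn k bn bnk hbn hbnk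
end

section
/- For all natural numbers p and q with q ≤ p, B(q + 1/2, p − q + 1/2) = π · (C(p,q) / C(2p,2q)) · ((2p−1)!! / (2p)!!), where B is the Euler Beta function, C(a,b) denotes the binomial coefficient, and !! the double factorial. -/
/-- The Euler Beta function `B(x,y) = Γ(x)Γ(y)/Γ(x+y)`. -/
noncomputable def eulerBeta (x y : ℝ) : ℝ :=
  Real.Gamma x * Real.Gamma y / Real.Gamma (x + y)

lemma gamma_nat_add_half (n : ℕ) :
    Real.Gamma ((n : ℝ) + 1 / 2) = ((2 * n).factorial : ℝ) / (4 ^ n * n.factorial) * Real.sqrt Real.pi := by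
  induction n with
  | zero => norm_num [Real.Gamma_one_half_eq]
  | succ n ih =>
    have h : ((n : ℝ) + 1) + 1 / 2 = ((n : ℝ) + 1 / 2) + 1 := by ring
    push_cast
    rw [h, Real.Gamma_add_one (by positivity), ih]
    have h2 : 2 * (n + 1) = 2 * n + 1 + 1 := by ring
    rw [h2, Nat.factorial_succ, Nat.factorial_succ, Nat.factorial_succ]
    push_cast
    have h4 : (4 : ℝ) ^ n ≠ 0 := by positivity
    have hf : ((n.factorial : ℝ)) ≠ 0 := Nat.cast_ne_zero.mpr n.factorial_ne_zero
    field_simp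
    ring

lemma dfac_fac (p : ℕ) : (2 * p).factorial = (2 * p).doubleFactorial * (2 * p - 1).doubleFactorial := by
  cases p with
  | zero => rfl
  | succ n =>
    have : 2 * (n + 1) = (2 * n + 1) + 1 := by ring
    rw [this]
    simpa using Nat.factorial_eq_mul_doubleFactorial (2 * n + 1)

/-- For all `p q : ℕ` with `q ≤ p`,
`B(q + 1/2, p − q + 1/2) = π · (C(p,q)/C(2p,2q)) · ((2p−1)!!/(2p)!!)`,
where `!!` is the double factorial (with `0!! = 1` and `(−1)!! = 1`, the latter realized by
truncated natural subtraction `2*0 - 1 = 0`). -/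
theorem stmt15 (p q : ℕ) (hqp : q ≤ p) :
    eulerBeta ((q : ℝ) + 1 / 2) ((p : ℝ) - (q : ℝ) + 1 / 2)
      = Real.pi * ((p.choose q : ℝ) / ((2 * p).choose (2 * q) : ℝ)) *
        ((Nat.doubleFactorial (2 * p - 1) : ℝ) / (Nat.doubleFactorial (2 * p) : ℝ)) := by
  obtain ⟨r, rfl⟩ := Nat.exists_eq_add_of_le hqp
  have e1 : ((q : ℝ) + r) - q + 1 / 2 = (r : ℝ) + 1 / 2 := by ring
  have e2 : ((q : ℝ) + 1 / 2) + ((r : ℝ) + 1 / 2) = ((q + r : ℕ) : ℝ) + 1 := by push_cast; ring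
  rw [eulerBeta]
  push_cast
  rw [e1, e2, gamma_nat_add_half, gamma_nat_add_half, Real.Gamma_nat_eq_factorial,
    Nat.cast_choose ℝ hqp, Nat.cast_choose ℝ (by omega : 2 * q ≤ 2 * (q + r))]
  have hsub : q + r - q = r := by omega
  have hsub2 : 2 * (q + r) - 2 * q = 2 * r := by omega
  rw [hsub, hsub2]
  have hdf : ((2 * (q + r)).doubleFactorial : ℝ) = 2 ^ (q + r) * (q + r).factorial := by
    rw [Nat.doubleFactorial_two_mul]; push_cast; ring
  have hdf1 : ((2 * (q + r) - 1).doubleFactorial : ℝ)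
      = ((2 * (q + r)).factorial : ℝ) / (2 ^ (q + r) * (q + r).factorial) := by
    have := dfac_fac (q + r)
    rw [eq_div_iff (by positivity), ← hdf]
    rw [this]; push_cast; ring
  rw [hdf, hdf1]
  have hsq : Real.sqrt Real.pi * Real.sqrt Real.pi = Real.pi :=
    Real.mul_self_sqrt Real.pi_pos.le
  have f1 : ((q.factorial : ℝ)) ≠ 0 := Nat.cast_ne_zero.mpr q.factorial_ne_zero
  have f2 : ((r.factorial : ℝ)) ≠ 0 := Nat.cast_ne_zero.mpr r.factorial_ne_zero
  have f3 : (((q+r).factorial : ℝ)) ≠ 0 := Nat.cast_ne_zero.mpr (q+r).factorial_ne_zero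
  have f4 : (((2*q).factorial : ℝ)) ≠ 0 := Nat.cast_ne_zero.mpr (2*q).factorial_ne_zero
  have f5 : (((2*r).factorial : ℝ)) ≠ 0 := Nat.cast_ne_zero.mpr (2*r).factorial_ne_zero
  have f6 : (((2*(q+r)).factorial : ℝ)) ≠ 0 := Nat.cast_ne_zero.mpr (2*(q+r)).factorial_ne_zero
  have p4 : (4:ℝ)^q ≠ 0 := by positivity
  have p5 : (4:ℝ)^r ≠ 0 := by positivity
  have p6 : (2:ℝ)^(q+r) ≠ 0 := by positivity
  field_simp
  have k1 : (2:ℝ)^(q*2) = 4^q := by rw [pow_mul, ← pow_mul, mul_comm, pow_mul]; norm_num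
  have k2 : (2:ℝ)^(r*2) = 4^r := by rw [pow_mul, ← pow_mul, mul_comm, pow_mul]; norm_num
  ring_nf
  rw [Real.sq_sqrt Real.pi_pos.le, k1, k2]
end

section
/- Let d ≥ 2 and let g be an invertible real d×d matrix. Define h(t) = (|g t|^d / |t|^d)(1 + |g t|²)^{−d/2} − (1 + |t|²)^{−d/2} for t ∈ ℝ^d, t ≠ 0. Then |h(t)| = O(|t|^{−d−2}) as |t| → ∞ (i.e. there exist constants C and R with |h(t)| ≤ C |t|^{−d−2} whenever |t| ≥ R), and consequently h ∈ ℓ₁(L∞)(ℝ^d), i.e. Σ_{n ∈ ℤ^d} ess sup_{t ∈ n+[0,1]^d} |h(t)| < ∞. -/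
/-!
Write `a = |g t|` and `b = |t|`. Since `a^d (1 + a²)^{-d/2} = (1 + a⁻²)^{-d/2}`, one has
`h(t) = b^{-d} (φ(a⁻²) - φ(b⁻²))` with `φ(s) = (1 + s)^{-d/2}`, and `φ` is `d/2`-Lipschitz on
`[0, ∞)`; as `a` and `b` are comparable, this gives the decay `|t|^{-d-2}`. On the cube
`n + [0,1]^d` every `max(1, |nᵢ|)` is at most `1 + |t|`, so a bound `C (1 + |t|)^{-d-2}` on `|h|`
is dominated there by `C ∏ᵢ max(1, |nᵢ|)^{-(d+2)/d}`, a product of summable sequences on `ℤ`.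
-/

open MeasureTheory

lemma one_sub_one_add_rpow_neg_le {p x : ℝ} (hp : 0 ≤ p) (hx : 0 ≤ x) :
    1 - (1 + x) ^ (-p) ≤ p * x := by
  have hx1 : 0 < 1 + x := by linarith
  have hexp : 1 - p * Real.log (1 + x) ≤ (1 + x) ^ (-p) := by
    rw [Real.rpow_def_of_pos hx1]
    linarith [Real.add_one_le_exp (Real.log (1 + x) * -p)]
  have hlog : Real.log (1 + x) ≤ x := by linarith [Real.log_le_sub_one_of_pos hx1]
  nlinarith

lemma abs_one_add_rpow_neg_sub_le {p x y : ℝ} (hp : 0 ≤ p) (hx : 0 ≤ x) (hy : 0 ≤ y) :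
    |(1 + x) ^ (-p) - (1 + y) ^ (-p)| ≤ p * (x + y) := by
  have hx1 : (1 + x) ^ (-p) ≤ 1 :=
    Real.rpow_le_one_of_one_le_of_nonpos (by linarith) (neg_nonpos.mpr hp)
  have hy1 : (1 + y) ^ (-p) ≤ 1 :=
    Real.rpow_le_one_of_one_le_of_nonpos (by linarith) (neg_nonpos.mpr hp)
  have := one_sub_one_add_rpow_neg_le hp hx
  have := one_sub_one_add_rpow_neg_le hp hy
  rw [abs_sub_le_iff]
  constructor <;> nlinarith

lemma pow_mul_one_add_sq_rpow {a : ℝ} (ha : 0 < a) (d : ℕ) :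
    a ^ d * (1 + a ^ 2) ^ (-(d : ℝ) / 2) = (1 + a⁻¹ ^ 2) ^ (-(d : ℝ) / 2) := by
  have hsplit : 1 + a⁻¹ ^ 2 = (1 + a ^ 2) * (a ^ 2)⁻¹ := by field_simp; ring
  have hpow : ((a ^ 2)⁻¹) ^ (-(d : ℝ) / 2) = a ^ d := by
    rw [Real.inv_rpow (by positivity), ← Real.rpow_neg (by positivity), ← Real.rpow_natCast,
      ← Real.rpow_natCast, ← Real.rpow_mul ha.le]
    push_cast
    ring_nf
  rw [hsplit, Real.mul_rpow (by positivity) (by positivity), hpow, mul_comm]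

lemma abs_pow_div_pow_mul_sub_le {a b : ℝ} (ha : 0 < a) (hb : 0 < b) (d : ℕ) :
    |a ^ d / b ^ d * (1 + a ^ 2) ^ (-(d : ℝ) / 2) - (1 + b ^ 2) ^ (-(d : ℝ) / 2)|
      ≤ d / 2 * (a⁻¹ ^ 2 + b⁻¹ ^ 2) / b ^ d := by
  have hb' : (1 + b ^ 2) ^ (-(d : ℝ) / 2) = b ^ d * (1 + b ^ 2) ^ (-(d : ℝ) / 2) / b ^ d := by
    field_simp
  rw [div_mul_eq_mul_div, hb', ← sub_div, pow_mul_one_add_sq_rpow ha, pow_mul_one_add_sq_rpow hb,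
    abs_div, abs_of_pos (by positivity : 0 < b ^ d)]
  gcongr
  simpa only [neg_div] using
    abs_one_add_rpow_neg_sub_le (p := d / 2) (by positivity) (by positivity) (by positivity)

lemma abs_pow_div_pow_mul_sub_le_of_le_mul {a b K : ℝ} (ha : 0 ≤ a) (hb : 0 < b)
    (hba : b ≤ K * a) (d : ℕ) :
    |a ^ d / b ^ d * (1 + a ^ 2) ^ (-(d : ℝ) / 2) - (1 + b ^ 2) ^ (-(d : ℝ) / 2)|
      ≤ d / 2 * (K ^ 2 + 1) * b ^ (-(d : ℝ) - 2) := by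
  have ha : 0 < a := ha.lt_of_ne <| by rintro rfl; linarith [mul_zero K]
  have hinv : a⁻¹ ≤ K * b⁻¹ := by
    rw [inv_le_iff_one_le_mul₀ ha, ← mul_le_mul_iff_left₀ hb]
    calc 1 * b ≤ K * a := by rwa [one_mul]
      _ = K * b⁻¹ * a * b := by field_simp
  have hrpow : b ^ (-(d : ℝ) - 2) = b⁻¹ ^ 2 / b ^ d := by
    rw [show -(d : ℝ) - 2 = -((d + 2 : ℕ) : ℝ) by push_cast; ring, Real.rpow_neg hb.le,
      Real.rpow_natCast, pow_add]
    field_simp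
  calc _ ≤ d / 2 * (a⁻¹ ^ 2 + b⁻¹ ^ 2) / b ^ d := abs_pow_div_pow_mul_sub_le ha hb d
    _ ≤ d / 2 * ((K * b⁻¹) ^ 2 + b⁻¹ ^ 2) / b ^ d := by gcongr
    _ = d / 2 * (K ^ 2 + 1) * b ^ (-(d : ℝ) - 2) := by rw [hrpow]; ring

lemma abs_pow_div_pow_mul_sub_le_pow_add_one {a b K : ℝ} (ha : 0 ≤ a) (hb : 0 ≤ b) (hK : 0 ≤ K)
    (hab : a ≤ K * b) (d : ℕ) :
    |a ^ d / b ^ d * (1 + a ^ 2) ^ (-(d : ℝ) / 2) - (1 + b ^ 2) ^ (-(d : ℝ) / 2)|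
      ≤ K ^ d + 1 := by
  have hd : -(d : ℝ) / 2 ≤ 0 := by simp only [neg_div, neg_nonpos]; positivity
  have ha1 : (1 + a ^ 2) ^ (-(d : ℝ) / 2) ≤ 1 :=
    Real.rpow_le_one_of_one_le_of_nonpos (by nlinarith) hd
  have hb1 : (1 + b ^ 2) ^ (-(d : ℝ) / 2) ≤ 1 :=
    Real.rpow_le_one_of_one_le_of_nonpos (by nlinarith) hd
  have hfirst : a ^ d / b ^ d * (1 + a ^ 2) ^ (-(d : ℝ) / 2) ≤ K ^ d := by
    rw [← div_pow]
    calc _ ≤ K ^ d * 1 := by gcongr; exact div_le_of_le_mul₀ hb hK hab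
      _ = K ^ d := mul_one _
  have hfirst0 : 0 ≤ a ^ d / b ^ d * (1 + a ^ 2) ^ (-(d : ℝ) / 2) := by positivity
  have hsecond0 : 0 ≤ (1 + b ^ 2) ^ (-(d : ℝ) / 2) := by positivity
  have hKd : 0 ≤ K ^ d := by positivity
  rw [abs_sub_le_iff]
  constructor <;> linarith

lemma Matrix.norm_le_mul_norm_toEuclideanLin {n : Type*} [Fintype n] [DecidableEq n]
    {g : Matrix n n ℝ} (hg : g.det ≠ 0) (t : EuclideanSpace ℝ n) :
    ‖t‖ ≤ ‖toEuclideanCLM (𝕜 := ℝ) g⁻¹‖ * ‖toEuclideanLin g t‖ := by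
  calc ‖t‖ = ‖toEuclideanCLM (𝕜 := ℝ) g⁻¹ (toEuclideanCLM (𝕜 := ℝ) g t)‖ := by
        rw [← mul_apply_eq_comp, ← map_mul, nonsing_inv_mul g (isUnit_iff_ne_zero.mpr hg),
          map_one, one_apply_eq_self]
    _ ≤ _ := ContinuousLinearMap.le_opNorm _ _

lemma abs_le_mul_one_add_norm_rpow_neg {E : Type*} [SeminormedAddCommGroup E] {f : E → ℝ}
    {B C r : ℝ} (hr : 0 ≤ r) (hB : ∀ t, |f t| ≤ B) (hC : ∀ t, 1 ≤ ‖t‖ → |f t| ≤ C * ‖t‖ ^ (-r))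
    (t : E) : |f t| ≤ 2 ^ r * max B C * (1 + ‖t‖) ^ (-r) := by
  have hM : 0 ≤ max B C := ((abs_nonneg _).trans (hB t)).trans (le_max_left B C)
  have hscale : ∀ s, 0 < s → 1 + ‖t‖ ≤ 2 * s → s ^ (-r) ≤ 2 ^ r * (1 + ‖t‖) ^ (-r) := by
    intro s hs hts
    calc s ^ (-r) = 2 ^ r * (2 * s) ^ (-r) := by
          rw [Real.mul_rpow (by norm_num) hs.le, Real.rpow_neg (by norm_num : (0 : ℝ) ≤ 2),
            ← mul_assoc, mul_inv_cancel₀ (by positivity), one_mul]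
      _ ≤ 2 ^ r * (1 + ‖t‖) ^ (-r) := mul_le_mul_of_nonneg_left
          (Real.rpow_le_rpow_of_nonpos (by positivity) hts (neg_nonpos.mpr hr)) (by positivity)
  rcases le_total ‖t‖ 1 with ht | ht
  · calc |f t| ≤ max B C * 1 ^ (-r) := by
          rw [Real.one_rpow, mul_one]; exact (hB t).trans (le_max_left B C)
      _ ≤ max B C * (2 ^ r * (1 + ‖t‖) ^ (-r)) := by
          gcongr; exact hscale 1 one_pos (by linarith)
      _ = _ := by ring
  · calc |f t| ≤ max B C * ‖t‖ ^ (-r) := (hC t ht).trans (by gcongr; exact le_max_right B C)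
      _ ≤ max B C * (2 ^ r * (1 + ‖t‖) ^ (-r)) := by
          gcongr; exact hscale _ (by linarith) (by linarith)
      _ = _ := by ring

def unitCube {d : ℕ} (n : Fin d → ℤ) : Set (EuclideanSpace ℝ (Fin d)) :=
  {t | ∀ i, (n i : ℝ) ≤ t i ∧ t i ≤ (n i : ℝ) + 1}

lemma measurableSet_unitCube {d : ℕ} (n : Fin d → ℤ) : MeasurableSet (unitCube n) := by
  have : IsClosed (unitCube n) := by
    simp only [unitCube, Set.ofPred_forall]
    exact isClosed_iInter fun i => (isClosed_le (by fun_prop) (by fun_prop)).and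
      (isClosed_le (by fun_prop) (by fun_prop))
  exact this.measurableSet

lemma max_one_abs_le_one_add_norm {d : ℕ} {n : Fin d → ℤ} {t : EuclideanSpace ℝ (Fin d)}
    (ht : t ∈ unitCube n) (i : Fin d) : max 1 |(n i : ℝ)| ≤ 1 + ‖t‖ := by
  have hti : |t i| ≤ ‖t‖ := PiLp.norm_apply_le t i
  obtain ⟨hlo, hhi⟩ := ht i
  refine max_le (by linarith [norm_nonneg t]) (abs_le.mpr ⟨?_, ?_⟩) <;>
    linarith [neg_abs_le (t i), le_abs_self (t i)]

lemma one_add_norm_rpow_neg_le_prod {d : ℕ} (hd : 0 < d) {r : ℝ} (hr : 0 ≤ r) {n : Fin d → ℤ}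
    {t : EuclideanSpace ℝ (Fin d)} (ht : t ∈ unitCube n) :
    (1 + ‖t‖) ^ (-r) ≤ ∏ i, max 1 |(n i : ℝ)| ^ (-(r / d)) := by
  have hsplit : (1 + ‖t‖) ^ (-r) = ∏ _i : Fin d, (1 + ‖t‖) ^ (-(r / d)) := by
    rw [Finset.prod_const, Finset.card_univ, Fintype.card_fin, ← Real.rpow_natCast,
      ← Real.rpow_mul (by positivity)]
    field_simp
  rw [hsplit]
  refine Finset.prod_le_prod (fun i _ => by positivity) fun i _ => ?_
  exact Real.rpow_le_rpow_of_nonpos (lt_max_of_lt_left one_pos)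
    (max_one_abs_le_one_add_norm ht i) (neg_nonpos.mpr (by positivity))

lemma summable_max_one_abs_rpow_neg {p : ℝ} (hp : 1 < p) :
    Summable fun m : ℤ => max 1 |(m : ℝ)| ^ (-p) := by
  refine ((Real.summable_abs_int_rpow hp).update 0 1).congr fun m => ?_
  rcases eq_or_ne m 0 with rfl | hm
  · simp
  · have : (1 : ℝ) ≤ |(m : ℝ)| := by exact_mod_cast Int.one_le_abs hm
    simp [Function.update_of_ne hm, max_eq_right this]

lemma summable_fin_prod_apply {α : Type*} {f : α → ℝ} (hf0 : 0 ≤ f) (hf : Summable f) (k : ℕ) :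
    Summable fun n : Fin k → α => ∏ i, f (n i) := by
  induction k with
  | zero => exact .of_finite
  | succ k ih =>
    have hprod : Summable fun q : α × (Fin k → α) => f q.1 * ∏ i, f (q.2 i) :=
      hf.mul_of_nonneg (g := fun n : Fin k → α => ∏ i, f (n i)) ih hf0
        fun n => Finset.prod_nonneg fun i _ => hf0 _
    refine ((Fin.consEquiv fun _ => α).symm.summable_iff.mpr hprod).congr fun n => ?_
    simp only [Function.comp_apply, Fin.prod_univ_succ]
    rfl

theorem tsum_essSup_unitCube_ne_top {d : ℕ} (hd : 0 < d) {f : EuclideanSpace ℝ (Fin d) → ℝ}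
    {C r : ℝ} (hr : d < r) (hf : ∀ t, |f t| ≤ C * (1 + ‖t‖) ^ (-r)) :
    ∑' n, essSup (fun t => ENNReal.ofReal |f t|) (volume.restrict (unitCube n)) ≠ ⊤ := by
  have hC : 0 ≤ C := (abs_nonneg _).trans (by simpa using hf 0)
  have hp : 1 < r / d := (one_lt_div (by exact_mod_cast hd)).2 hr
  set w : (Fin d → ℤ) → ℝ := fun n => C * ∏ i, max 1 |(n i : ℝ)| ^ (-(r / d))
  have hw0 : ∀ n, 0 ≤ w n := fun n => by positivity
  have hw : Summable w :=
    (summable_fin_prod_apply (fun m => by positivity) (summable_max_one_abs_rpow_neg hp) d).mul_left C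
  have hcube : ∀ n, essSup (fun t => ENNReal.ofReal |f t|) (volume.restrict (unitCube n))
      ≤ ENNReal.ofReal (w n) := fun n =>
    essSup_le_of_ae_le _ <| (ae_restrict_iff' (measurableSet_unitCube n)).2 <| ae_of_all _
      fun t ht => ENNReal.ofReal_le_ofReal <| (hf t).trans <|
        mul_le_mul_of_nonneg_left (one_add_norm_rpow_neg_le_prod hd (by linarith) ht) hC
  refine ne_top_of_le_ne_top ?_ (ENNReal.tsum_le_tsum hcube)
  rw [← ENNReal.ofReal_tsum_of_nonneg hw0 hw]
  exact ENNReal.ofReal_ne_top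

/-- Let `d ≥ 2` and `g` an invertible real `d×d` matrix. Define
`h(t) = (|gt|^d/|t|^d)(1+|gt|²)^{-d/2} − (1+|t|²)^{-d/2}`. Then `|h(t)| = O(|t|^{-d-2})`
as `|t| → ∞`, and consequently `h ∈ ℓ₁(L∞)(ℝ^d)`, i.e.
`∑_{n ∈ ℤ^d} ess sup_{t ∈ n+[0,1]^d} |h(t)| < ∞`. -/
theorem stmt16 {d : ℕ} (hd : 2 ≤ d)
    (g : Matrix (Fin d) (Fin d) ℝ) (hg : g.det ≠ 0)
    (h : EuclideanSpace ℝ (Fin d) → ℝ)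
    (hh : ∀ t : EuclideanSpace ℝ (Fin d),
      h t = ‖Matrix.toEuclideanLin g t‖ ^ d / ‖t‖ ^ d *
          (1 + ‖Matrix.toEuclideanLin g t‖ ^ 2) ^ (-(d : ℝ) / 2)
        - (1 + ‖t‖ ^ 2) ^ (-(d : ℝ) / 2)) :
    (∃ C R : ℝ, ∀ t : EuclideanSpace ℝ (Fin d), R ≤ ‖t‖ →
      |h t| ≤ C * ‖t‖ ^ (-(d : ℝ) - 2)) ∧
    (∑' n : Fin d → ℤ,
      essSup (fun t => ENNReal.ofReal |h t|)
        ((volume : Measure (EuclideanSpace ℝ (Fin d))).restrict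
          {t : EuclideanSpace ℝ (Fin d) | ∀ i, (n i : ℝ) ≤ t i ∧ t i ≤ (n i : ℝ) + 1}))
      ≠ ⊤ := by
  set K := ‖Matrix.toEuclideanCLM (𝕜 := ℝ) g⁻¹‖
  have hdecay : ∀ t, 1 ≤ ‖t‖ → |h t| ≤ d / 2 * (K ^ 2 + 1) * ‖t‖ ^ (-(d : ℝ) - 2) := by
    intro t ht
    rw [hh]
    exact abs_pow_div_pow_mul_sub_le_of_le_mul (norm_nonneg _) (by linarith)
      (Matrix.norm_le_mul_norm_toEuclideanLin hg t) d
  have hbdd : ∀ t, |h t| ≤ ‖Matrix.toEuclideanCLM (𝕜 := ℝ) g‖ ^ d + 1 := fun t => by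
    rw [hh]
    exact abs_pow_div_pow_mul_sub_le_pow_add_one (norm_nonneg _) (norm_nonneg _) (norm_nonneg _)
      ((Matrix.toEuclideanCLM (𝕜 := ℝ) g).le_opNorm t) d
  have hdecay' : ∀ t, 1 ≤ ‖t‖ → |h t| ≤ d / 2 * (K ^ 2 + 1) * ‖t‖ ^ (-((d : ℝ) + 2)) := by
    simpa only [neg_add'] using hdecay
  exact ⟨⟨_, 1, hdecay⟩, tsum_essSup_unitCube_ne_top (by omega) (by linarith)
    (abs_le_mul_one_add_norm_rpow_neg (by positivity) hbdd hdecay')⟩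
end
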